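/- arXiv:1105.3082 — 9 statements merged into one kernel-verified Lean document; each statement's English description precedes it below -/
import Mathlib

section
/- Let f(x) = ∫_{(0,∞)} (1 - e^{-tx}) ν(dt) be a Bernstein function with vanishing constant and drift, and set ν₁(x) = ∫_0^x ν((s,∞)) ds. Then for all x > 0: ((e-1)/e)·x·ν₁(1/x) ≤ f(x) ≤ x·ν₁(1/x). -/
open Set MeasureTheory

lemma aux_upper (u : ℝ) : 1 - Real.exp (-u) ≤ min u 1 := by
  refine le_min ?_ ?_
  · have := Real.add_one_le_exp (-u)
    linarith
  · have := Real.exp_pos (-u)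
    linarith

lemma aux_lower (u : ℝ) (hu : 0 ≤ u) :
    (1 - Real.exp (-1)) * min u 1 ≤ 1 - Real.exp (-u) := by
  rcases le_total u 1 with h | h
  · rw [min_eq_left h]
    have hconv := convexOn_exp.2 (mem_univ (0:ℝ)) (mem_univ (-1:ℝ))
      (by linarith : (0:ℝ) ≤ 1 - u) hu (by ring)
    simp only [smul_eq_mul, mul_zero, zero_add, mul_neg, mul_one, Real.exp_zero] at hconv
    nlinarith [Real.exp_pos (-1)]
  · rw [min_eq_right h]
    have : Real.exp (-u) ≤ Real.exp (-1) := Real.exp_le_exp.2 (by linarith)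
    linarith

/-- Two-sided bound for a drift-free, killing-free Bernstein function in terms
of the integrated tail `ν₁` of its Lévy measure:
`((e-1)/e)·x·ν₁(1/x) ≤ f(x) ≤ x·ν₁(1/x)` for all `x > 0`. -/
theorem stmt_3 (ν : Measure ℝ) (f ν₁ : ℝ → ℝ)
    (hlevy : ∫⁻ t in Ioi (0:ℝ), ENNReal.ofReal (min 1 t) ∂ν < ⊤)
    (hsupp : ν (Iic (0:ℝ)) = 0)
    (hf : ∀ x : ℝ, f x = ∫ t in Ioi (0:ℝ), (1 - Real.exp (-(t * x))) ∂ν)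
    (hν₁ : ∀ x : ℝ, ν₁ x = ∫ s in (0:ℝ)..x, (ν (Ioi s)).toReal) :
    ∀ x > (0:ℝ),
      (Real.exp 1 - 1) / Real.exp 1 * (x * ν₁ (1/x)) ≤ f x ∧
        f x ≤ x * ν₁ (1/x) := by
  intro x hx
  set c : ℝ := 1/x with hcdef
  have hc : 0 < c := by positivity
  -- tail finiteness
  have htail : ∀ a : ℝ, 0 < a → ν (Ioi a) < ⊤ := by
    intro a ha
    have h1 : ∫⁻ t in Ioi (0:ℝ), (Ioi a).indicator (fun _ => ENNReal.ofReal (min 1 a)) t ∂ν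
        ≤ ∫⁻ t in Ioi (0:ℝ), ENNReal.ofReal (min 1 t) ∂ν := by
      refine lintegral_mono fun t => ?_
      by_cases ht : t ∈ Ioi a
      · simp only [indicator_of_mem ht]
        exact ENNReal.ofReal_le_ofReal (min_le_min le_rfl (le_of_lt ht))
      · simp [indicator_of_notMem ht]
    rw [lintegral_indicator measurableSet_Ioi _, setLIntegral_const,
      Measure.restrict_apply measurableSet_Ioi,
      inter_eq_left.2 (Ioi_subset_Ioi ha.le)] at h1
    by_contra hcon
    rw [not_lt, top_le_iff] at hcon
    rw [hcon, ENNReal.mul_top (by simp [ha, lt_min_iff, zero_lt_one] :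
      ENNReal.ofReal (min 1 a) ≠ 0)] at h1
    exact absurd (top_le_iff.1 h1) (by exact fun h => absurd h (ne_of_lt hlevy))
  -- finiteness of ∫ min t c
  have hfinc : ∫⁻ t in Ioi (0:ℝ), ENNReal.ofReal (min t c) ∂ν < ⊤ := by
    have hmono : ∀ t : ℝ, ENNReal.ofReal (min t c)
        ≤ ENNReal.ofReal (max 1 c) * ENNReal.ofReal (min 1 t) := by
      intro t
      rcases le_total t 0 with ht | ht
      · rw [ENNReal.ofReal_of_nonpos (le_trans (min_le_left _ _) ht)]
        exact zero_le
      · rw [← ENNReal.ofReal_mul (le_trans zero_le_one (le_max_left _ _))]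
        apply ENNReal.ofReal_le_ofReal
        rcases le_total t 1 with h1 | h1
        · rw [min_eq_right h1]
          calc min t c ≤ t := min_le_left _ _
            _ = 1 * t := (one_mul t).symm
            _ ≤ max 1 c * t := mul_le_mul_of_nonneg_right (le_max_left _ _) ht
        · rw [min_eq_left h1, mul_one]
          exact le_trans (min_le_right _ _) (le_max_right _ _)
    calc ∫⁻ t in Ioi (0:ℝ), ENNReal.ofReal (min t c) ∂ν
        ≤ ∫⁻ t in Ioi (0:ℝ), ENNReal.ofReal (max 1 c) * ENNReal.ofReal (min 1 t) ∂ν :=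
          lintegral_mono hmono
      _ = ENNReal.ofReal (max 1 c) * ∫⁻ t in Ioi (0:ℝ), ENNReal.ofReal (min 1 t) ∂ν :=
          lintegral_const_mul' _ _ ENNReal.ofReal_ne_top
      _ < ⊤ := ENNReal.mul_lt_top ENNReal.ofReal_lt_top hlevy
  -- layer cake
  have key : ∫⁻ t in Ioi (0:ℝ), ENNReal.ofReal (min t c) ∂ν
      = ∫⁻ s in Ioo (0:ℝ) c, ν (Ioi s) := by
    have hnn : (0:ℝ → ℝ) ≤ᵐ[ν.restrict (Ioi 0)] fun t => min t c :=
      (ae_restrict_iff' measurableSet_Ioi).2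
        (ae_of_all _ fun t ht => le_min (le_of_lt ht) hc.le)
    have hm : AEMeasurable (fun t : ℝ => min t c) (ν.restrict (Ioi 0)) :=
      (measurable_id.min measurable_const).aemeasurable
    rw [lintegral_eq_lintegral_meas_lt _ hnn hm]
    have hset : ∀ s ∈ Ioi (0:ℝ),
        (ν.restrict (Ioi 0)) {t : ℝ | s < min t c}
          = (Iio c).indicator (fun s => ν (Ioi s)) s := by
      intro s hs
      by_cases hsc : s < c
      · have hseteq : {t : ℝ | s < min t c} = Ioi s := by
          ext t; simp [lt_min_iff, hsc, mem_Ioi]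
        rw [hseteq, Measure.restrict_apply measurableSet_Ioi,
          inter_eq_left.2 (Ioi_subset_Ioi hs.le),
          indicator_of_mem (mem_Iio.2 hsc)]
      · have hseteq : {t : ℝ | s < min t c} = ∅ := by
          ext t
          simp only [mem_setOf_eq, lt_min_iff, mem_empty_iff_false, iff_false, not_and]
          exact fun _ => hsc
        rw [hseteq, indicator_of_notMem (by simpa using hsc)]
        simp
    rw [setLIntegral_congr_fun measurableSet_Ioi (fun s hs => hset s hs),
      lintegral_indicator measurableSet_Iio _,
      Measure.restrict_restrict measurableSet_Iio, Iio_inter_Ioi]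
  have hantimeas : Measurable fun s : ℝ => ν (Ioi s) :=
    Antitone.measurable fun a b hab => measure_mono (Ioi_subset_Ioi hab)
  -- ν₁ c as toReal of the lintegral
  have hν₁c : ν₁ c = (∫⁻ t in Ioi (0:ℝ), ENNReal.ofReal (min t c) ∂ν).toReal := by
    rw [hν₁, intervalIntegral.integral_of_le hc.le]
    rw [integral_toReal hantimeas.aemeasurable
      ((ae_restrict_iff' measurableSet_Ioc).2 (ae_of_all _ fun s hs => htail s hs.1))]
    rw [key, setLIntegral_congr (Ioo_ae_eq_Ioc (α := ℝ) (a := 0) (b := c))]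
  -- express x * ν₁ c as a Bochner integral
  have hmineq : ∀ t : ℝ, min (t * x) 1 = x * min t c := by
    intro t
    have hxc : x * c = 1 := by
      rw [hcdef]; field_simp
    rw [mul_min_of_nonneg _ _ hx.le, hxc, mul_comm x t]
  have hxν₁ : x * ν₁ c = ∫ t in Ioi (0:ℝ), min (t * x) 1 ∂ν := by
    have hnn : (0:ℝ → ℝ) ≤ᵐ[ν.restrict (Ioi 0)] fun t => min (t * x) 1 :=
      (ae_restrict_iff' measurableSet_Ioi).2
        (ae_of_all _ fun t ht => le_min (mul_nonneg (le_of_lt ht) hx.le) zero_le_one)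
    have hm : AEStronglyMeasurable (fun t : ℝ => min (t * x) 1) (ν.restrict (Ioi 0)) :=
      ((continuous_id.mul continuous_const).min continuous_const).aestronglyMeasurable
    rw [integral_eq_lintegral_of_nonneg_ae hnn hm]
    have : ∀ t : ℝ, ENNReal.ofReal (min (t * x) 1)
        = ENNReal.ofReal x * ENNReal.ofReal (min t c) := by
      intro t
      rw [hmineq t, ENNReal.ofReal_mul hx.le]
    simp_rw [this]
    rw [lintegral_const_mul' _ _ ENNReal.ofReal_ne_top,
      ENNReal.toReal_mul, ENNReal.toReal_ofReal hx.le, hν₁c]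
  -- integrability
  have hIntG : Integrable (fun t : ℝ => min (t * x) 1) (ν.restrict (Ioi 0)) := by
    refine ⟨((continuous_id.mul continuous_const).min continuous_const).aestronglyMeasurable, ?_⟩
    have hnn : (0:ℝ → ℝ) ≤ᵐ[ν.restrict (Ioi 0)] fun t => min (t * x) 1 :=
      (ae_restrict_iff' measurableSet_Ioi).2
        (ae_of_all _ fun t ht => le_min (mul_nonneg (le_of_lt ht) hx.le) zero_le_one)
    rw [hasFiniteIntegral_iff_ofReal hnn]
    have : ∀ t : ℝ, ENNReal.ofReal (min (t * x) 1)
        = ENNReal.ofReal x * ENNReal.ofReal (min t c) := by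
      intro t
      rw [hmineq t, ENNReal.ofReal_mul hx.le]
    simp_rw [this]
    rw [lintegral_const_mul' _ _ ENNReal.ofReal_ne_top]
    exact ENNReal.mul_lt_top ENNReal.ofReal_lt_top hfinc
  have hIntF : Integrable (fun t : ℝ => 1 - Real.exp (-(t * x))) (ν.restrict (Ioi 0)) := by
    refine Integrable.mono hIntG
      ((continuous_const.sub ((continuous_id.mul continuous_const).neg.rexp)).aestronglyMeasurable)
      ?_
    refine (ae_restrict_iff' measurableSet_Ioi).2 (ae_of_all _ fun t ht => ?_)
    have hu : 0 ≤ t * x := mul_nonneg (le_of_lt ht) hx.le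
    have h1 : 0 ≤ 1 - Real.exp (-(t * x)) := by
      have := Real.exp_le_one_iff.2 (by linarith : -(t*x) ≤ 0)
      linarith
    rw [Real.norm_eq_abs, Real.norm_eq_abs, abs_of_nonneg h1,
      abs_of_nonneg (le_min hu zero_le_one)]
    exact aux_upper (t * x)
  -- conclusion
  have hub : f x ≤ x * ν₁ c := by
    rw [hf, hxν₁]
    refine integral_mono_ae hIntF hIntG ?_
    exact ae_of_all _ fun t => aux_upper (t * x)
  have hlb : (1 - Real.exp (-1)) * (x * ν₁ c) ≤ f x := by
    rw [hf, hxν₁, ← integral_const_mul]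
    refine integral_mono_ae (hIntG.const_mul _) hIntF ?_
    refine (ae_restrict_iff' measurableSet_Ioi).2 (ae_of_all _ fun t ht => ?_)
    exact aux_lower (t * x) (mul_nonneg (le_of_lt ht) hx.le)
  have hcoef : (Real.exp 1 - 1) / Real.exp 1 = 1 - Real.exp (-1) := by
    rw [Real.exp_neg]
    field_simp
  exact ⟨by rw [hcoef]; exact hlb, hub⟩
end

section
/- Let ν be a nonnegative measure on (0,∞) with ∫min(1,t)ν(dt) < ∞, B:(0,∞)→(0,∞) increasing, G(t)=∫_1^t ds/(2sB(s)) (signed convention), and for r > 0 define g(r) = ∫_0^r ν(2(G(r)-G(u)), ∞) du. Then g(r) ≥ (1/2)·r·B(r/2)·∫_0^{1/B(r/2)} ν((s,∞)) ds. -/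
open Set MeasureTheory intervalIntegral

/-- Lower bound for `g(r) = ∫_0^r ν(2(G(r)-G(u)),∞) du`:
`g(r) ≥ (1/2)·r·B(r/2)·∫_0^{1/B(r/2)} ν((s,∞)) ds`. -/
theorem stmt_7 (ν : Measure ℝ) (B G g : ℝ → ℝ)
    (hlevy : ∫⁻ t in Ioi (0:ℝ), ENNReal.ofReal (min 1 t) ∂ν < ⊤)
    (hsupp : ν (Iic (0:ℝ)) = 0)
    (hBpos : ∀ x > (0:ℝ), 0 < B x)
    (hBmono : ∀ x y : ℝ, 0 < x → x ≤ y → B x ≤ B y)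
    (hG : ∀ t : ℝ, G t = ∫ s in (1:ℝ)..t, 1 / (2 * s * B s))
    (hg : ∀ r : ℝ, g r = ∫ u in (0:ℝ)..r, (ν (Ioi (2 * (G r - G u)))).toReal) :
    ∀ r > (0:ℝ),
      (1/2) * r * B (r/2) * ∫ s in (0:ℝ)..(1 / B (r/2)), (ν (Ioi s)).toReal
        ≤ g r := by
  intro r hr
  have hbpos : 0 < B (r/2) := hBpos _ (by linarith)
  have hBr : 0 < B r := hBpos r hr
  -- the tail function
  have Tanti : Antitone (fun s : ℝ => ν (Ioi s)) :=
    fun x y h => measure_mono (Ioi_subset_Ioi h)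
  have Tmeas : Measurable (fun s : ℝ => ν (Ioi s)) := Tanti.measurable
  set tails : ℝ → ℝ := fun s => (ν (Ioi s)).toReal with htails
  have tmeas : Measurable tails := Tmeas.ennreal_toReal
  -- finiteness of tails
  have hfin : ∀ s : ℝ, 0 < s → ν (Ioi s) ≠ ⊤ := by
    intro s hs
    have h1 : ENNReal.ofReal (min 1 s) * ν (Ioi s)
        ≤ ∫⁻ t in Ioi s, ENNReal.ofReal (min 1 t) ∂ν := by
      rw [← setLIntegral_const]
      exact setLIntegral_mono ((measurable_const.min measurable_id).ennreal_ofReal) fun t ht =>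
        ENNReal.ofReal_le_ofReal (min_le_min le_rfl ht.le)
    have h2 : ∫⁻ t in Ioi s, ENNReal.ofReal (min 1 t) ∂ν
        ≤ ∫⁻ t in Ioi (0:ℝ), ENNReal.ofReal (min 1 t) ∂ν :=
      lintegral_mono_set (Ioi_subset_Ioi hs.le)
    have h3 : ENNReal.ofReal (min 1 s) * ν (Ioi s) < ⊤ := lt_of_le_of_lt (h1.trans h2) hlevy
    intro htop
    rw [htop, ENNReal.mul_top (ENNReal.ofReal_pos.mpr (lt_min one_pos hs)).ne'] at h3
    exact lt_irrefl _ h3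
  -- integrability of the tail function near 0
  have tailints : ∀ a : ℝ, 0 < a → IntegrableOn tails (Ioc 0 a) := by
    intro a ha
    have key : ∫⁻ s in Ioc (0:ℝ) a, ν (Ioi s) < ⊤ := by
      set μ := ν.restrict (Ioi (0:ℝ)) with hμ
      have hnn : 0 ≤ᵐ[μ] fun t => min a t := by
        filter_upwards [ae_restrict_mem measurableSet_Ioi] with t ht
        exact le_min ha.le ht.le
      have hlc : ∫⁻ t, ENNReal.ofReal (min a t) ∂μ
          = ∫⁻ s in Ioi (0:ℝ), μ {t : ℝ | s < min a t} :=
        lintegral_eq_lintegral_meas_lt μ hnn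
          ((measurable_const.min measurable_id).aemeasurable)
      calc ∫⁻ s in Ioc (0:ℝ) a, ν (Ioi s) = ∫⁻ s in Ioo (0:ℝ) a, ν (Ioi s) :=
            (setLIntegral_congr Ioo_ae_eq_Ioc).symm
        _ ≤ ∫⁻ s in Ioo (0:ℝ) a, μ {t : ℝ | s < min a t} := by
            apply setLIntegral_mono' measurableSet_Ioo
            intro s hs
            have : {t : ℝ | s < min a t} = Ioi s ∩ Ioi (0:ℝ) := by
              ext t
              simp only [mem_setOf_eq, lt_min_iff, mem_inter_iff, mem_Ioi]
              constructor
              · rintro ⟨_, h2⟩; exact ⟨h2, lt_trans hs.1 h2⟩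
              · rintro ⟨h1, _⟩; exact ⟨hs.2, h1⟩
            rw [this, hμ, Measure.restrict_apply (measurableSet_Ioi.inter measurableSet_Ioi),
              inter_assoc, inter_self,
              inter_eq_self_of_subset_left (Ioi_subset_Ioi hs.1.le)]
        _ ≤ ∫⁻ s in Ioi (0:ℝ), μ {t : ℝ | s < min a t} :=
            lintegral_mono_set Ioo_subset_Ioi_self
        _ = ∫⁻ t, ENNReal.ofReal (min a t) ∂μ := hlc.symm
        _ ≤ ∫⁻ t, ENNReal.ofReal (max 1 a) * ENNReal.ofReal (min 1 t) ∂μ := by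
            apply lintegral_mono
            intro t
            dsimp only
            rcases le_or_gt t 0 with ht | ht
            · have h0 : ENNReal.ofReal (min a t) = 0 := by
                rw [ENNReal.ofReal_eq_zero]
                exact le_trans (min_le_right a t) ht
              rw [h0]; exact zero_le
            · rw [← ENNReal.ofReal_mul (le_max_of_le_left zero_le_one)]
              apply ENNReal.ofReal_le_ofReal
              rcases le_or_gt t 1 with h | h
              · rw [min_eq_right h]
                calc min a t ≤ t := min_le_right _ _
                  _ = 1 * t := (one_mul t).symm
                  _ ≤ max 1 a * t := mul_le_mul_of_nonneg_right (le_max_left _ _) ht.le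
              · rw [min_eq_left h.le, mul_one]
                exact le_trans (min_le_left a t) (le_max_right _ _)
        _ = ENNReal.ofReal (max 1 a) * ∫⁻ t, ENNReal.ofReal (min 1 t) ∂μ := by
            rw [lintegral_const_mul (f := fun t => ENNReal.ofReal (min 1 t)) _
              ((measurable_const.min measurable_id).ennreal_ofReal)]
        _ < ⊤ := ENNReal.mul_lt_top ENNReal.ofReal_lt_top hlevy
    exact integrable_toReal_of_lintegral_ne_top Tmeas.aemeasurable key.ne
  -- the integrand of G
  set W : ℝ → ℝ := fun s => 1 / (2 * s * B s) with hW
  have hWint : ∀ u v : ℝ, 0 < u → 0 < v → IntervalIntegrable W volume u v := by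
    intro u v hu hv
    apply AntitoneOn.intervalIntegrable
    intro x hx y hy hxy
    have hmin : 0 < min u v := lt_min hu hv
    rw [uIcc_eq_union] at hx hy
    have hx0 : 0 < x := by
      rcases hx with h | h
      · exact lt_of_lt_of_le hu h.1
      · exact lt_of_lt_of_le hv h.1
    have hy0 : 0 < y := lt_of_lt_of_le hx0 hxy
    have hmul : 2 * x * B x ≤ 2 * y * B y := by
      have h1 := hBmono x y hx0 hxy
      nlinarith [hBpos x hx0, hBpos y hy0]
    exact one_div_le_one_div_of_le (by nlinarith [hBpos x hx0]) hmul
  have hGsub : ∀ u v : ℝ, 0 < u → 0 < v → G v - G u = ∫ s in u..v, W s := by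
    intro u v hu hv
    rw [hG v, hG u,
      ← intervalIntegral.integral_add_adjacent_intervals (hWint 1 u one_pos hu)
        (hWint u v hu hv)]
    ring
  -- abbreviations
  set k : ℝ := 2 / (r * B (r/2)) with hk
  set c : ℝ := 1 / (r * B r) with hc
  have hkpos : 0 < k := by positivity
  have hcpos : 0 < c := by positivity
  -- upper estimate of 2(G r - G u) for u in [r/2, r]
  have hupper : ∀ u ∈ Icc (r/2) r, 2 * (G r - G u) ≤ k * (r - u) := by
    intro u hu
    have hu0 : 0 < u := lt_of_lt_of_le (by linarith) hu.1
    have h1 : G r - G u ≤ (r - u) * (1 / (r * B (r/2))) := by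
      rw [hGsub u r hu0 hr]
      calc ∫ s in u..r, W s ≤ ∫ _ in u..r, 1 / (r * B (r/2)) := by
            apply intervalIntegral.integral_mono_on hu.2 (hWint u r hu0 hr)
              intervalIntegrable_const
            intro x hx
            have hx1 : r/2 ≤ x := le_trans hu.1 hx.1
            have hx0 : 0 < x := by linarith
            have hmul : r * B (r/2) ≤ 2 * x * B x := by
              have hB := hBmono (r/2) x (by linarith) hx1
              nlinarith [hbpos]
            exact one_div_le_one_div_of_le (by positivity) hmul
        _ = (r - u) * (1 / (r * B (r/2))) := by
            rw [intervalIntegral.integral_const, smul_eq_mul]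
    have h2 : k * (r - u) = 2 * ((r - u) * (1 / (r * B (r/2)))) := by
      rw [hk]; ring
    rw [h2]; linarith
  -- lower estimate of 2(G r - G u) for u in (0, r]
  have hlower : ∀ u ∈ Ioc (0:ℝ) r, c * (r - u) ≤ 2 * (G r - G u) := by
    intro u hu
    have h1 : (r - u) * (1 / (2 * r * B r)) ≤ G r - G u := by
      rw [hGsub u r hu.1 hr]
      calc (r - u) * (1 / (2 * r * B r)) = ∫ _ in u..r, 1 / (2 * r * B r) := by
            rw [intervalIntegral.integral_const, smul_eq_mul]
        _ ≤ ∫ s in u..r, W s := by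
            apply intervalIntegral.integral_mono_on hu.2 intervalIntegrable_const
              (hWint u r hu.1 hr)
            intro x hx
            have hx0 : 0 < x := lt_of_lt_of_le hu.1 hx.1
            have hBx := hBpos x hx0
            have hmul : 2 * x * B x ≤ 2 * r * B r := by
              have hB := hBmono x r hx0 hx.2
              have h9 : x * B x ≤ r * B r := mul_le_mul hx.2 hB hBx.le hr.le
              linarith
            exact one_div_le_one_div_of_le (by positivity) hmul
    have h2 : c * (r - u) = 2 * ((r - u) * (1 / (2 * r * B r))) := by
      rw [hc]; ring
    rw [h2]; linarith
  -- pointwise comparison from below on [r/2, r]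
  have hcomp1 : ∀ u ∈ Icc (r/2) r, tails (k * (r - u))
      ≤ (ν (Ioi (2 * (G r - G u)))).toReal := by
    intro u hu
    rcases eq_or_lt_of_le hu.2 with h | h
    · rw [h]; simp; exact le_rfl
    · have hu0 : 0 < u := lt_of_lt_of_le (by linarith) hu.1
      have hpos : 0 < 2 * (G r - G u) :=
        lt_of_lt_of_le (by nlinarith) (hlower u ⟨hu0, hu.2⟩)
      exact ENNReal.toReal_mono (hfin _ hpos)
        (measure_mono (Ioi_subset_Ioi (hupper u hu)))
  -- pointwise comparison from above on (0, r]
  have hcomp2 : ∀ u ∈ Ioc (0:ℝ) r, (ν (Ioi (2 * (G r - G u)))).toReal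
      ≤ tails (c * (r - u)) := by
    intro u hu
    rcases eq_or_lt_of_le hu.2 with h | h
    · rw [h]; simp; exact le_rfl
    · exact ENNReal.toReal_mono (hfin _ (by nlinarith))
        (measure_mono (Ioi_subset_Ioi (hlower u hu)))
  -- integrability of the dominating function
  have hψint : IntervalIntegrable (fun u => tails (c * (r - u))) volume 0 r := by
    have h1 : IntervalIntegrable tails volume 0 (c * r) := by
      rw [intervalIntegrable_iff_integrableOn_Ioc_of_le (by positivity)]
      exact tailints _ (by positivity)
    have h2 := h1.comp_mul_left (c := c)
    rw [zero_div, mul_comm c r, mul_div_assoc, div_self hcpos.ne', mul_one] at h2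
    have h3 := h2.comp_sub_left r
    rw [sub_zero, sub_self] at h3
    exact h3.symm
  -- integrability of the main integrand
  have hFint : IntervalIntegrable
      (fun u => (ν (Ioi (2 * (G r - G u)))).toReal) volume 0 r := by
    rw [intervalIntegrable_iff_integrableOn_Ioc_of_le hr.le] at hψint ⊢
    have hGmono : MonotoneOn G (Ioc (0:ℝ) r) := by
      intro x hx y hy hxy
      have h0 : G y - G x = ∫ s in x..y, W s := hGsub x y hx.1 hy.1
      have hnn : 0 ≤ ∫ s in x..y, W s := by
        apply intervalIntegral.integral_nonneg hxy
        intro s hs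
        have hs0 : 0 < s := lt_of_lt_of_le hx.1 hs.1
        have := hBpos s hs0
        positivity
      have hnn' : 0 ≤ G y - G x := h0 ▸ hnn
      linarith
    have hFmono : MonotoneOn (fun u => ν (Ioi (2 * (G r - G u)))) (Ioc (0:ℝ) r) := by
      intro x hx y hy hxy
      apply measure_mono
      apply Ioi_subset_Ioi
      have := hGmono hx hy hxy
      linarith
    have hmeas : AEStronglyMeasurable (fun u => (ν (Ioi (2 * (G r - G u)))).toReal)
        (volume.restrict (Ioc (0:ℝ) r)) :=
      ((aemeasurable_restrict_of_monotoneOn measurableSet_Ioc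
        hFmono).ennreal_toReal).aestronglyMeasurable
    have hbound : ∀ᵐ u ∂(volume.restrict (Ioc (0:ℝ) r)),
        ‖(ν (Ioi (2 * (G r - G u)))).toReal‖ ≤ ‖tails (c * (r - u))‖ := by
      filter_upwards [ae_restrict_mem measurableSet_Ioc] with u hu
      rw [Real.norm_eq_abs, Real.norm_eq_abs, abs_of_nonneg ENNReal.toReal_nonneg,
        abs_of_nonneg ENNReal.toReal_nonneg]
      exact hcomp2 u hu
    exact Integrable.mono hψint hmeas hbound
  -- integrability of the comparison function on [r/2, r]
  have hφint : IntervalIntegrable (fun u => tails (k * (r - u))) volume (r/2) r := by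
    have h1 : IntervalIntegrable tails volume 0 (1 / B (r/2)) := by
      rw [intervalIntegrable_iff_integrableOn_Ioc_of_le (by positivity)]
      exact tailints _ (by positivity)
    have h2 := h1.comp_mul_left (c := k)
    have e2 : 1 / B (r/2) / k = r/2 := by
      rw [hk]; field_simp
    rw [zero_div, e2] at h2
    have h3 := h2.comp_sub_left r
    rw [sub_zero] at h3
    have e3 : r - r/2 = r/2 := by ring
    rw [e3] at h3
    exact h3.symm
  -- the substitution identity
  have key1 : ∫ u in (r/2)..r, tails (k * (r - u))
      = (1/2) * r * B (r/2) * ∫ s in (0:ℝ)..(1 / B (r/2)), tails s := by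
    calc ∫ u in (r/2)..r, tails (k * (r - u))
        = ∫ x in (r - r)..(r - r/2), tails (k * x) :=
          intervalIntegral.integral_comp_sub_left (fun x => tails (k * x)) r
      _ = ∫ x in (0:ℝ)..(r/2), tails (k * x) := by
          rw [sub_self, show r - r/2 = r/2 from by ring]
      _ = k⁻¹ • ∫ x in (k * 0)..(k * (r/2)), tails x :=
          intervalIntegral.integral_comp_mul_left tails hkpos.ne'
      _ = (1/2) * r * B (r/2) * ∫ s in (0:ℝ)..(1 / B (r/2)), tails s := by
          have e1 : k * 0 = 0 := mul_zero k
          have e2 : k * (r/2) = 1 / B (r/2) := by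
            rw [hk]; field_simp
          have e3 : k⁻¹ = (1/2) * r * B (r/2) := by
            rw [hk]; field_simp
          simp only [e1, e2, e3, smul_eq_mul]
  -- assemble
  have main : (1/2) * r * B (r/2) * ∫ s in (0:ℝ)..(1 / B (r/2)), tails s
      ≤ ∫ u in (0:ℝ)..r, (ν (Ioi (2 * (G r - G u)))).toReal := by
    have sub1 : uIcc (0:ℝ) (r/2) ⊆ uIcc (0:ℝ) r := by
      rw [uIcc_of_le (by linarith), uIcc_of_le hr.le]
      exact Icc_subset_Icc le_rfl (by linarith)
    have sub2 : uIcc (r/2) r ⊆ uIcc (0:ℝ) r := by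
      rw [uIcc_of_le (by linarith), uIcc_of_le hr.le]
      exact Icc_subset_Icc (by linarith) le_rfl
    calc (1/2) * r * B (r/2) * ∫ s in (0:ℝ)..(1 / B (r/2)), tails s
        = ∫ u in (r/2)..r, tails (k * (r - u)) := key1.symm
      _ ≤ ∫ u in (r/2)..r, (ν (Ioi (2 * (G r - G u)))).toReal :=
          intervalIntegral.integral_mono_on (by linarith) hφint (hFint.mono_set sub2) hcomp1
      _ ≤ ∫ u in (0:ℝ)..r, (ν (Ioi (2 * (G r - G u)))).toReal := by
          rw [← intervalIntegral.integral_add_adjacent_intervals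
            (hFint.mono_set sub1) (hFint.mono_set sub2)]
          have hnn : 0 ≤ ∫ u in (0:ℝ)..(r/2), (ν (Ioi (2 * (G r - G u)))).toReal :=
            intervalIntegral.integral_nonneg (by linarith)
              fun u _ => ENNReal.toReal_nonneg
          linarith
  rw [hg r]
  exact main
end

section
/- Let ν, B, G, g be as follows: ν a nonnegative measure on (0,∞) with ∫min(1,t)ν(dt)<∞, B:(0,∞)→(0,∞) increasing, G(t)=∫_1^t ds/(2sB(s)), g(r)=∫_0^r ν(2(G(r)-G(u)),∞) du. Then g(r) ≤ r·B(r)·∫_0^{1/B(r)} ν((s,∞)) ds for all r > 0. -/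
open Set MeasureTheory intervalIntegral

/-- Upper bound for `g(r) = ∫_0^r ν(2(G(r)-G(u)),∞) du`:
`g(r) ≤ r·B(r)·∫_0^{1/B(r)} ν((s,∞)) ds`. -/
theorem stmt_8 (ν : Measure ℝ) (B G g : ℝ → ℝ)
    (hlevy : ∫⁻ t in Ioi (0:ℝ), ENNReal.ofReal (min 1 t) ∂ν < ⊤)
    (hsupp : ν (Iic (0:ℝ)) = 0)
    (hBpos : ∀ x > (0:ℝ), 0 < B x)
    (hBmono : ∀ x y : ℝ, 0 < x → x ≤ y → B x ≤ B y)
    (hG : ∀ t : ℝ, G t = ∫ s in (1:ℝ)..t, 1 / (2 * s * B s))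
    (hg : ∀ r : ℝ, g r = ∫ u in (0:ℝ)..r, (ν (Ioi (2 * (G r - G u)))).toReal) :
    ∀ r > (0:ℝ),
      g r ≤ r * B r * ∫ s in (0:ℝ)..(1 / B r), (ν (Ioi s)).toReal := by
  intro r hr
  have hBr : 0 < B r := hBpos r hr
  set c : ℝ := r * B r with hc
  have hcpos : 0 < c := mul_pos hr hBr
  set f : ℝ → ℝ := fun s => (ν (Ioi s)).toReal with hfdef
  -- tails are finite
  have hfin : ∀ ε : ℝ, 0 < ε → ν (Ioi ε) < ⊤ := by
    intro ε hε
    have h1 : ∫⁻ _ in Ioi ε, ENNReal.ofReal (min 1 ε) ∂ν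
        = ENNReal.ofReal (min 1 ε) * ν (Ioi ε) := setLIntegral_const _ _
    have h2 : ∫⁻ _ in Ioi ε, ENNReal.ofReal (min 1 ε) ∂ν
        ≤ ∫⁻ t in Ioi ε, ENNReal.ofReal (min 1 t) ∂ν := by
      refine setLIntegral_mono ((measurable_const.min measurable_id).ennreal_ofReal) ?_
      intro t ht
      exact ENNReal.ofReal_le_ofReal (min_le_min le_rfl (le_of_lt ht))
    have h3 : ∫⁻ t in Ioi ε, ENNReal.ofReal (min 1 t) ∂ν
        ≤ ∫⁻ t in Ioi (0:ℝ), ENNReal.ofReal (min 1 t) ∂ν :=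
      lintegral_mono_set (Ioi_subset_Ioi hε.le)
    have hfin' : ENNReal.ofReal (min 1 ε) * ν (Ioi ε) < ⊤ :=
      h1 ▸ lt_of_le_of_lt (h2.trans h3) hlevy
    by_contra htop
    push_neg at htop
    rw [top_le_iff.1 htop, ENNReal.mul_top] at hfin'
    · exact (lt_irrefl _) hfin'
    · simp only [ne_eq, ENNReal.ofReal_eq_zero, not_le]
      exact lt_min one_pos hε
  -- layer cake type bound
  have hkey : ∀ a : ℝ, 0 < a → ∫⁻ s in Ioc (0:ℝ) a, ν (Ioi s) < ⊤ := by
    intro a ha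
    have hmin_meas : Measurable fun t : ℝ => min a t := measurable_const.min measurable_id
    have hnn : 0 ≤ᵐ[ν.restrict (Ioi 0)] fun t => min a t := by
      filter_upwards [ae_restrict_mem measurableSet_Ioi] with t ht
      exact le_min ha.le ht.le
    have e1 := lintegral_eq_lintegral_meas_lt (ν.restrict (Ioi 0)) hnn hmin_meas.aemeasurable
    have hmax : (0:ℝ) ≤ max a 1 := le_trans zero_le_one (le_max_right _ _)
    calc ∫⁻ s in Ioc (0:ℝ) a, ν (Ioi s)
        = ∫⁻ s in Ioo (0:ℝ) a, ν (Ioi s) := (setLIntegral_congr Ioo_ae_eq_Ioc).symm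
      _ = ∫⁻ s in Ioo (0:ℝ) a, (ν.restrict (Ioi 0)) {t : ℝ | s < min a t} := by
          refine setLIntegral_congr_fun measurableSet_Ioo ?_
          intro s hs
          have hset : {t : ℝ | s < min a t} = Ioi s := by
            ext t
            simp only [mem_setOf_eq, lt_min_iff, mem_Ioi]
            exact ⟨fun h => h.2, fun h => ⟨hs.2, h⟩⟩
          beta_reduce
          rw [hset, Measure.restrict_apply measurableSet_Ioi,
            inter_eq_left.2 (Ioi_subset_Ioi hs.1.le)]
      _ ≤ ∫⁻ s in Ioi (0:ℝ), (ν.restrict (Ioi 0)) {t : ℝ | s < min a t} :=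
          lintegral_mono_set (fun x hx => hx.1)
      _ = ∫⁻ t, ENNReal.ofReal (min a t) ∂(ν.restrict (Ioi 0)) := e1.symm
      _ ≤ ∫⁻ t, ENNReal.ofReal (max a 1) * ENNReal.ofReal (min 1 t) ∂(ν.restrict (Ioi 0)) := by
          refine lintegral_mono_ae ?_
          filter_upwards [ae_restrict_mem measurableSet_Ioi] with t ht
          rw [← ENNReal.ofReal_mul hmax]
          refine ENNReal.ofReal_le_ofReal ?_
          rcases le_total t 1 with h | h
          · have h1 : min 1 t = t := min_eq_right h
            have h2 : min a t ≤ t := min_le_right _ _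
            nlinarith [le_max_right a (1:ℝ), le_of_lt (mem_Ioi.mp ht)]
          · have h1 : min 1 t = 1 := min_eq_left h
            have h2 : min a t ≤ a := min_le_left _ _
            nlinarith [le_max_left a (1:ℝ)]
      _ = ENNReal.ofReal (max a 1) * ∫⁻ t in Ioi (0:ℝ), ENNReal.ofReal (min 1 t) ∂ν :=
          lintegral_const_mul _ ((measurable_const.min measurable_id).ennreal_ofReal)
      _ < ⊤ := ENNReal.mul_lt_top ENNReal.ofReal_lt_top hlevy
  -- f is measurable
  have htail_anti : Antitone fun s : ℝ => ν (Ioi s) := fun x y hxy =>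
    measure_mono (Ioi_subset_Ioi hxy)
  have hfmeas : Measurable f := htail_anti.measurable.ennreal_toReal
  -- f is interval integrable on [0, a]
  have hfInt : ∀ a : ℝ, 0 < a → IntervalIntegrable f volume 0 a := by
    intro a ha
    rw [intervalIntegrable_iff, uIoc_of_le ha.le]
    refine ⟨hfmeas.aestronglyMeasurable.restrict, ?_⟩
    rw [hasFiniteIntegral_iff_norm]
    refine lt_of_le_of_lt ?_ (hkey a ha)
    refine lintegral_mono fun s => ?_
    rw [Real.norm_eq_abs, abs_of_nonneg ENNReal.toReal_nonneg]
    exact ENNReal.ofReal_toReal_le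
  have hrc : r / c = 1 / B r := by
    rw [hc]
    field_simp
  have hf0 : IntervalIntegrable f volume 0 (r / c) := by
    rw [hrc]; exact hfInt _ (by positivity)
  have hF : IntervalIntegrable (fun x => f (x / c)) volume 0 r := by
    have h := hf0.comp_mul_left (c := c⁻¹)
    have h0 : (0:ℝ) / c⁻¹ = 0 := zero_div _
    have hrr : r / c / c⁻¹ = r := by field_simp
    rw [h0, hrr] at h
    simpa only [div_eq_inv_mul] using h
  have h2int : IntervalIntegrable (fun u => f ((r - u) / c)) volume 0 r := by
    have h := (hF.comp_sub_left r).symm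
    simp only [sub_self, sub_zero] at h
    exact h
  -- integral substitution
  have hEq : ∫ u in (0:ℝ)..r, f ((r - u) / c) = c * ∫ s in (0:ℝ)..(1 / B r), f s := by
    have e1 := intervalIntegral.integral_comp_sub_left (a := 0) (b := r)
      (fun x => f (x / c)) r
    simp only [sub_self, sub_zero] at e1
    rw [e1, intervalIntegral.integral_comp_div (f := f) hcpos.ne', zero_div, hrc,
      smul_eq_mul]
  -- interval integrability of 1/(2sB(s))
  have hwInt : ∀ p q : ℝ, 0 < p → 0 < q →
      IntervalIntegrable (fun s => 1 / (2 * s * B s)) volume p q := by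
    intro p q hp hq
    set m := min p q with hm
    have hm0 : 0 < m := lt_min hp hq
    have hBm : 0 < B m := hBpos m hm0
    set B' : ℝ → ℝ := fun x => B (max x m) with hB'
    have hB'mono : Monotone B' := fun x y hxy =>
      hBmono _ _ (lt_of_lt_of_le hm0 (le_max_right _ _)) (max_le_max hxy le_rfl)
    have hB'meas : Measurable B' := hB'mono.measurable
    have hmem : ∀ s ∈ Set.uIoc p q, m < s := fun s hs => by
      rcases Set.mem_uIoc.1 hs with h | h
      · exact lt_of_le_of_lt (min_le_left _ _) h.1
      · exact lt_of_le_of_lt (min_le_right _ _) h.1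
    haveI : IsFiniteMeasure (volume.restrict (Set.uIoc p q)) := by
      constructor
      rw [Measure.restrict_apply_univ, Set.uIoc]
      exact measure_Ioc_lt_top
    rw [intervalIntegrable_iff]
    constructor
    · refine AEStronglyMeasurable.congr
        (f := fun s => 1 / (2 * s * B' s)) ?_ ?_
      · exact (measurable_const.div
          ((measurable_const.mul measurable_id).mul hB'meas)).aestronglyMeasurable.restrict
      · filter_upwards [ae_restrict_mem measurableSet_uIoc] with s hs
        have := hmem s hs
        simp only [hB', max_eq_left this.le]
    · refine HasFiniteIntegral.of_bounded (C := 1 / (2 * m * B m)) ?_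
      filter_upwards [ae_restrict_mem measurableSet_uIoc] with s hs
      have hms : m < s := hmem s hs
      have hs0 : 0 < s := hm0.trans hms
      have hBs : 0 < B s := hBpos s hs0
      have hle : 2 * m * B m ≤ 2 * s * B s := by
        have hb := hBmono m s hm0 hms.le
        have e1 : m * B m ≤ m * B s := mul_le_mul_of_nonneg_left hb hm0.le
        have e2 : m * B s ≤ s * B s := mul_le_mul_of_nonneg_right hms.le (hBm.trans_le hb).le
        linarith
      rw [Real.norm_eq_abs, abs_of_pos (by positivity)]
      exact one_div_le_one_div_of_le (by positivity) hle
  -- G r - G u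
  have hGd : ∀ u : ℝ, 0 < u → G r - G u = ∫ s in u..r, 1 / (2 * s * B s) := by
    intro u hu
    rw [hG r, hG u]
    exact intervalIntegral.integral_interval_sub_left (hwInt 1 r one_pos hr)
      (hwInt 1 u one_pos hu)
  -- mean value inequality
  have hMV : ∀ u ∈ Ioo (0:ℝ) r, (r - u) / c ≤ 2 * (G r - G u) := by
    intro u hu
    rw [hGd u hu.1]
    have h1 : ∫ s in u..r, 1 / (2 * r * B r) ≤ ∫ s in u..r, 1 / (2 * s * B s) := by
      refine intervalIntegral.integral_mono_on hu.2.le intervalIntegrable_const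
        (hwInt u r hu.1 hr) ?_
      intro s hs
      have hs0 : 0 < s := hu.1.trans_le hs.1
      have hBs : 0 < B s := hBpos s hs0
      have hle : 2 * s * B s ≤ 2 * r * B r := by
        have hb := hBmono s r hs0 hs.2
        have e1 : s * B s ≤ s * B r := mul_le_mul_of_nonneg_left hb hs0.le
        have e2 : s * B r ≤ r * B r := mul_le_mul_of_nonneg_right hs.2 hBr.le
        linarith
      exact one_div_le_one_div_of_le (by positivity) hle
    rw [intervalIntegral.integral_const, smul_eq_mul] at h1
    have heq : (r - u) / c = 2 * ((r - u) * (1 / (2 * r * B r))) := by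
      rw [hc]
      field_simp
    rw [heq]
    linarith
  -- pointwise comparison on Ioc 0 r
  have hcomp : ∀ u ∈ Ioc (0:ℝ) r,
      (ν (Ioi (2 * (G r - G u)))).toReal ≤ f ((r - u) / c) := by
    intro u hu
    rcases eq_or_lt_of_le hu.2 with h | h
    · subst h
      simp [hfdef]
    · have hmv := hMV u ⟨hu.1, h⟩
      have hpos : 0 < (r - u) / c := div_pos (by linarith) hcpos
      exact ENNReal.toReal_mono (hfin _ hpos).ne
        (measure_mono (Ioi_subset_Ioi hmv))
  -- conclude
  rw [hg r, ← hEq]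
  by_cases hI : IntervalIntegrable
      (fun u => (ν (Ioi (2 * (G r - G u)))).toReal) volume 0 r
  · refine intervalIntegral.integral_mono_ae_restrict hr.le hI h2int ?_
    have h0 : ∀ᵐ u ∂volume.restrict (Icc (0:ℝ) r), u ∈ Icc (0:ℝ) r :=
      ae_restrict_mem measurableSet_Icc
    have hne : ∀ᵐ u ∂volume.restrict (Icc (0:ℝ) r), u ≠ 0 := by
      refine ae_restrict_of_ae ?_
      rw [ae_iff]
      have : {u : ℝ | ¬u ≠ 0} = {0} := by ext u; simp
      rw [this]
      exact measure_singleton 0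
    filter_upwards [h0, hne] with u hu hu0
    exact hcomp u ⟨lt_of_le_of_ne hu.1 (Ne.symm hu0), hu.2⟩
  · rw [intervalIntegral.integral_undef hI]
    refine intervalIntegral.integral_nonneg hr.le fun u _ => ENNReal.toReal_nonneg
end

section
/- Let A be a nonnegative self-adjoint operator on L²(X,m), f a non-constant Bernstein function, and Φ:L²→[0,∞] a functional with Φ(cu)=c²Φ(u). If ‖u‖₂²·f(B(‖u‖₂²)) ≤ ⟨f(A)u,u⟩ holds for all u ∈ D(f(A)) with Φ(u)=1, where B:(0,∞)→(0,∞) is increasing, then ‖u‖₂²·B(‖u‖₂²) ≤ ⟨Au,u⟩ for all u ∈ D(A) with Φ(u)=1. -/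
open Set MeasureTheory
open scoped ENNReal

private lemma aux_integrable (ν : Measure ℝ)
    (hlevy : ∫⁻ t in Ioi (0:ℝ), ENNReal.ofReal (min 1 t) ∂ν < ⊤)
    {g : ℝ → ℝ} (hg : Continuous g) {C : ℝ} (hC0 : 0 ≤ C)
    (hC : ∀ t : ℝ, 0 < t → |g t| ≤ C * min 1 t) :
    IntegrableOn g (Ioi (0:ℝ)) ν := by
  refine ⟨hg.aestronglyMeasurable, ?_⟩
  rw [hasFiniteIntegral_iff_norm]
  calc ∫⁻ t, ENNReal.ofReal ‖g t‖ ∂(ν.restrict (Ioi 0))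
      ≤ ∫⁻ t, ENNReal.ofReal C * ENNReal.ofReal (min 1 t) ∂(ν.restrict (Ioi 0)) := by
        refine lintegral_mono_ae ?_
        filter_upwards [ae_restrict_mem measurableSet_Ioi] with t ht
        rw [Real.norm_eq_abs, ← ENNReal.ofReal_mul hC0]
        exact ENNReal.ofReal_le_ofReal (hC t ht)
    _ = ENNReal.ofReal C * ∫⁻ t in Ioi (0:ℝ), ENNReal.ofReal (min 1 t) ∂ν :=
        lintegral_const_mul' _ _ ENNReal.ofReal_ne_top
    _ < ⊤ := ENNReal.mul_lt_top ENNReal.ofReal_lt_top hlevy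

private lemma aux_int1 (ν : Measure ℝ)
    (hlevy : ∫⁻ t in Ioi (0:ℝ), ENNReal.ofReal (min 1 t) ∂ν < ⊤)
    {x : ℝ} (hx : 0 ≤ x) :
    IntegrableOn (fun t : ℝ => 1 - Real.exp (-(t * x))) (Ioi (0:ℝ)) ν := by
  refine aux_integrable ν hlevy (by continuity) (le_trans zero_le_one (le_max_left 1 x)) fun t ht => ?_
  have h1 : 0 ≤ 1 - Real.exp (-(t * x)) := by
    simp only [sub_nonneg]
    exact Real.exp_le_one_iff.mpr (by nlinarith)
  have h2 : 1 - Real.exp (-(t * x)) ≤ t * x := by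
    have := Real.add_one_le_exp (-(t * x))
    linarith
  have h3 : 1 - Real.exp (-(t * x)) ≤ 1 := by
    have := Real.exp_pos (-(t * x)); linarith
  rw [abs_of_nonneg h1]
  rcases le_total t 1 with h | h
  · calc 1 - Real.exp (-(t * x)) ≤ t * x := h2
      _ ≤ t * max 1 x := by nlinarith [le_max_right 1 x]
      _ = max 1 x * min 1 t := by rw [min_eq_right h]; ring
  · calc 1 - Real.exp (-(t * x)) ≤ 1 := h3
      _ ≤ max 1 x * min 1 t := by
          rw [min_eq_left h]; nlinarith [le_max_left 1 x]

private lemma aux_int2 (ν : Measure ℝ)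
    (hlevy : ∫⁻ t in Ioi (0:ℝ), ENNReal.ofReal (min 1 t) ∂ν < ⊤)
    {θ : ℝ} (hθ : 0 < θ) :
    IntegrableOn (fun t : ℝ => t * Real.exp (-(t * θ))) (Ioi (0:ℝ)) ν := by
  have hC0 : (0:ℝ) ≤ max 1 (Real.exp 1 * θ)⁻¹ := le_trans zero_le_one (le_max_left _ _)
  refine aux_integrable ν hlevy (by continuity) hC0 fun t ht => ?_
  have hexp := Real.exp_pos (-(t * θ))
  have h0 : 0 ≤ t * Real.exp (-(t * θ)) := by positivity
  rw [abs_of_nonneg h0]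
  rcases le_total t 1 with h | h
  · calc t * Real.exp (-(t * θ)) ≤ t * 1 := by
          nlinarith [Real.exp_le_one_iff.mpr (show -(t*θ) ≤ 0 by nlinarith)]
      _ = min 1 t := by rw [min_eq_right h, mul_one]
      _ ≤ max 1 (Real.exp 1 * θ)⁻¹ * min 1 t := by
          nlinarith [le_max_left 1 (Real.exp 1 * θ)⁻¹, le_min zero_le_one ht.le]
  · -- t ≥ 1 : t e^{-tθ} ≤ 1/(e θ)
    have key : t * Real.exp (-(t * θ)) ≤ (Real.exp 1 * θ)⁻¹ := by
      have h1 : t * θ ≤ Real.exp (t * θ - 1) := by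
        linarith [Real.add_one_le_exp (t * θ - 1)]
      have h2 : t * θ * Real.exp (-(t * θ)) ≤ Real.exp (-1 : ℝ) := by
        have h3 := mul_le_mul_of_nonneg_right h1 hexp.le
        rwa [← Real.exp_add, show t * θ - 1 + -(t * θ) = -1 by ring] at h3
      rw [mul_inv, ← Real.exp_neg]
      have hθi : θ * θ⁻¹ = 1 := mul_inv_cancel₀ hθ.ne'
      have hθipos : 0 < θ⁻¹ := by positivity
      nlinarith [mul_le_mul_of_nonneg_right h2 hθipos.le]
    calc t * Real.exp (-(t * θ)) ≤ (Real.exp 1 * θ)⁻¹ := key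
      _ ≤ max 1 (Real.exp 1 * θ)⁻¹ * min 1 t := by
          rw [min_eq_left h, mul_one]; exact le_max_right _ _

private lemma aux_tangent (ν : Measure ℝ)
    (hlevy : ∫⁻ t in Ioi (0:ℝ), ENNReal.ofReal (min 1 t) ∂ν < ⊤)
    {θ x : ℝ} (hθ : 0 < θ) (hx : 0 ≤ x) :
    ∫ t in Ioi (0:ℝ), (1 - Real.exp (-(t * x))) ∂ν
      ≤ (∫ t in Ioi (0:ℝ), (1 - Real.exp (-(t * θ))) ∂ν)
        + (∫ t in Ioi (0:ℝ), t * Real.exp (-(t * θ)) ∂ν) * (x - θ) := by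
  have hI1 := aux_int1 ν hlevy hx
  have hIθ := aux_int1 ν hlevy hθ.le
  have hI2 := aux_int2 ν hlevy hθ
  have key : ∀ t ∈ Ioi (0:ℝ),
      (1 - Real.exp (-(t * x)))
        ≤ (1 - Real.exp (-(t * θ))) + (x - θ) * (t * Real.exp (-(t * θ))) := by
    intro t _
    have he : Real.exp (-(t * x)) = Real.exp (-(t * θ)) * Real.exp (-(t * (x - θ))) := by
      rw [← Real.exp_add]; ring_nf
    have h1 := Real.add_one_le_exp (-(t * (x - θ)))
    nlinarith [Real.exp_pos (-(t * θ))]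
  have hInt : IntegrableOn
      (fun t : ℝ => (1 - Real.exp (-(t * θ))) + (x - θ) * (t * Real.exp (-(t * θ))))
      (Ioi (0:ℝ)) ν := hIθ.add (hI2.const_mul (x - θ))
  have hmono := setIntegral_mono_on hI1 hInt measurableSet_Ioi key
  rw [integral_add hIθ (hI2.const_mul (x - θ)), integral_const_mul] at hmono
  linarith [hmono, mul_comm (x - θ) (∫ t in Ioi (0:ℝ), t * Real.exp (-(t * θ)) ∂ν)]

private lemma aux_smono (ν : Measure ℝ)
    (hlevy : ∫⁻ t in Ioi (0:ℝ), ENNReal.ofReal (min 1 t) ∂ν < ⊤)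
    (hsupp : ν (Iic (0:ℝ)) = 0) {b : ℝ} (hb : 0 ≤ b)
    (hnondeg : 0 < b ∨ ν ≠ 0) {s t : ℝ} (hs : 0 ≤ s) (hst : s < t) :
    b * s + ∫ τ in Ioi (0:ℝ), (1 - Real.exp (-(τ * s))) ∂ν
      < b * t + ∫ τ in Ioi (0:ℝ), (1 - Real.exp (-(τ * t))) ∂ν := by
  have hIs := aux_int1 ν hlevy hs
  have hIt := aux_int1 ν hlevy (hs.trans hst.le)
  have hpt : ∀ τ ∈ Ioi (0:ℝ),
      (1 - Real.exp (-(τ * s))) ≤ (1 - Real.exp (-(τ * t))) := by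
    intro τ hτ
    have : -(τ * t) ≤ -(τ * s) := by nlinarith [mem_Ioi.mp hτ]
    have := Real.exp_le_exp.mpr this
    linarith
  have hmono := setIntegral_mono_on hIs hIt measurableSet_Ioi hpt
  rcases hnondeg with hbpos | hν
  · nlinarith
  · have hνIoi : 0 < ν (Ioi (0:ℝ)) := by
      rcases eq_or_lt_of_le (zero_le : 0 ≤ ν (Ioi (0:ℝ))) with h | h
      · exfalso
        apply hν
        apply Measure.measure_univ_eq_zero.mp
        have : (univ : Set ℝ) = Iic 0 ∪ Ioi 0 := (Iic_union_Ioi).symm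
        rw [this]
        exact le_antisymm ((measure_union_le _ _).trans (by rw [hsupp, ← h]; simp)) zero_le
      · exact h
    have hdiff : 0 < ∫ τ in Ioi (0:ℝ),
        ((1 - Real.exp (-(τ * t))) - (1 - Real.exp (-(τ * s)))) ∂ν := by
      rw [setIntegral_pos_iff_support_of_nonneg_ae]
      · refine lt_of_lt_of_le hνIoi (measure_mono fun τ hτ => ?_)
        refine ⟨?_, hτ⟩
        have hτ0 := mem_Ioi.mp hτ
        have : -(τ * t) < -(τ * s) := by nlinarith
        have := Real.exp_lt_exp.mpr this
        simp only [Function.mem_support]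
        intro hcontra
        have : Real.exp (-(τ * s)) = Real.exp (-(τ * t)) := by linarith [sub_eq_zero.mp hcontra]
        linarith
      · filter_upwards [ae_restrict_mem measurableSet_Ioi] with τ hτ
        have := hpt τ hτ
        simp only [Pi.zero_apply]
        linarith
      · exact hIt.sub hIs
    rw [integral_sub hIt hIs] at hdiff
    nlinarith

instance stmt10_instCFCReal {X : Type*} [MeasurableSpace X] (m : Measure X) :
    ContinuousFunctionalCalculus ℝ (Lp ℂ 2 m →L[ℂ] Lp ℂ 2 m) IsSelfAdjoint :=
  IsSelfAdjoint.instContinuousFunctionalCalculus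

set_option maxHeartbeats 1000000 in
set_option maxRecDepth 8000 in
/-- Converse of the subordinated Nash inequality: if
`‖u‖₂²·f(B(‖u‖₂²)) ≤ ⟨f(A)u,u⟩` for all `u` with `Φ(u)=1`, then
`‖u‖₂²·B(‖u‖₂²) ≤ ⟨Au,u⟩` for all `u` with `Φ(u)=1`. -/
theorem stmt_10 {X : Type*} [MeasurableSpace X] (m : Measure X) [SigmaFinite m]
    (A : Lp ℂ 2 m →L[ℂ] Lp ℂ 2 m) (hA : IsSelfAdjoint A)
    (hAnonneg : ∀ x ∈ spectrum ℝ A, (0:ℝ) ≤ x)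
    (ν : Measure ℝ) (a b : ℝ) (f finv B : ℝ → ℝ)
    (Φ : Lp ℂ 2 m → ℝ≥0∞)
    (ha : 0 ≤ a) (hb : 0 ≤ b)
    (hlevy : ∫⁻ t in Ioi (0:ℝ), ENNReal.ofReal (min 1 t) ∂ν < ⊤)
    (hsupp : ν (Iic (0:ℝ)) = 0)
    (hf : ∀ x : ℝ, 0 ≤ x →
      f x = a + b * x + ∫ t in Ioi (0:ℝ), (1 - Real.exp (-(t * x))) ∂ν)
    (hnondeg : 0 < b ∨ ν ≠ 0)
    (hfinv : ∀ x : ℝ, 0 ≤ x → finv (f x) = x)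
    (hBpos : ∀ x > (0:ℝ), 0 < B x)
    (hBmono : ∀ x y : ℝ, 0 < x → x ≤ y → B x ≤ B y)
    (hΦ : ∀ (c : ℝ) (u : Lp ℂ 2 m), Φ ((c : ℂ) • u) = ENNReal.ofReal (c^2) * Φ u)
    (hnash : ∀ u : Lp ℂ 2 m, Φ u = 1 →
      ‖u‖^2 * f (B (‖u‖^2)) ≤ (inner ℂ ((cfc f A) u) u : ℂ).re) :
    ∀ u : Lp ℂ 2 m, Φ u = 1 →
      ‖u‖^2 * B (‖u‖^2) ≤ (inner ℂ (A u) u : ℂ).re := by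
  intro u hu
  -- `u ≠ 0`
  have hΦ0 : Φ 0 = 0 := by simpa using hΦ 0 0
  have hu0 : u ≠ 0 := by
    intro h; rw [h, hΦ0] at hu; exact zero_ne_one hu
  have hnu : (0:ℝ) < ‖u‖ := norm_pos_iff.mpr hu0
  have hn2 : (0:ℝ) < ‖u‖^2 := by positivity
  set N := ‖u‖^2 with hN
  have hBN := hBpos N hn2
  -- strict monotonicity of `f` on `[0,∞)`
  have hfmono : ∀ s t : ℝ, 0 ≤ s → s < t → f s < f t := by
    intro s t hs hst
    rw [hf s hs, hf t (hs.trans hst.le)]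
    have := aux_smono ν hlevy hsupp hb hnondeg hs hst
    linarith
  -- positivity of `A`
  have hApos : (0 : Lp ℂ 2 m →L[ℂ] Lp ℂ 2 m) ≤ A :=
    (StarOrderedRing.nonneg_iff_spectrum_nonneg (R := ℝ) A hA).mpr hAnonneg
  have hAinner : 0 ≤ (inner ℂ (A u) u : ℂ).re := by
    have := (ContinuousLinearMap.nonneg_iff_isPositive A |>.mp hApos).inner_nonneg_left u
    simpa using (Complex.nonneg_iff.mp this).1
  have hf0 : 0 ≤ f 0 := by
    rw [hf 0 le_rfl]
    simp [ha]
  by_cases hcont : ContinuousOn f (spectrum ℝ A)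
  · -- main case
    set θ : ℝ := (inner ℂ (A u) u : ℂ).re / N with hθdef
    have hθ0 : 0 ≤ θ := div_nonneg hAinner hn2.le
    have hθN : θ * N = (inner ℂ (A u) u : ℂ).re := div_mul_cancel₀ _ hn2.ne'
    have hkey : ∀ ε > (0:ℝ), B N ≤ θ + ε := by
      intro ε hε
      set θ' : ℝ := θ + ε with hθ'def
      have hθ'pos : 0 < θ' := by rw [hθ'def]; linarith
      set c : ℝ := b + ∫ t in Ioi (0:ℝ), t * Real.exp (-(t * θ')) ∂ν with hc
      have hJnn : 0 ≤ ∫ t in Ioi (0:ℝ), t * Real.exp (-(t * θ')) ∂ν :=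
        setIntegral_nonneg measurableSet_Ioi fun t ht => mul_nonneg (le_of_lt (mem_Ioi.mp ht)) (Real.exp_pos _).le
      have hcnn : 0 ≤ c := add_nonneg hb hJnn
      set c₀ : ℝ := f θ' - c * θ' with hc₀
      have hle : ∀ x ∈ spectrum ℝ A, f x ≤ c₀ + c * x := by
        intro x hx
        have hx0 := hAnonneg x hx
        have htan := aux_tangent ν hlevy hθ'pos hx0
        rw [hf x hx0]
        rw [hc₀, hf θ' hθ'pos.le, hc]
        nlinarith [htan]
      have hmono := cfc_mono hle hcont (by fun_prop)
      have haff : cfc (fun x : ℝ => c₀ + c * x) A = algebraMap ℝ _ c₀ + c • A := by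
        rw [cfc_add .., cfc_const c₀ A, cfc_const_mul .., cfc_id' ℝ A]
      rw [haff] at hmono
      -- compare inner products
      have hcomp : (inner ℂ ((cfc f A) u) u : ℂ).re
          ≤ (inner ℂ ((algebraMap ℝ _ c₀ + c • A) u) u : ℂ).re := by
        have := (ContinuousLinearMap.le_def _ _ |>.mp hmono).inner_nonneg_left u
        simp only [ContinuousLinearMap.sub_apply, inner_sub_left, map_sub,
          RCLike.re_to_complex] at this
        have := (Complex.nonneg_iff.mp this).1
        simp only [Complex.sub_re] at this
        linarith
      have hexpand : (inner ℂ ((algebraMap ℝ _ c₀ + c • A) u) u : ℂ).re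
          = c₀ * N + c * (inner ℂ (A u) u : ℂ).re := by
        rw [ContinuousLinearMap.add_apply, inner_add_left, Algebra.algebraMap_eq_smul_one]
        rw [ContinuousLinearMap.smul_apply, ContinuousLinearMap.smul_apply,
          ContinuousLinearMap.one_apply, RCLike.real_smul_eq_coe_smul (K := ℂ),
          RCLike.real_smul_eq_coe_smul (K := ℂ), inner_smul_left, inner_smul_left,
          inner_self_eq_norm_sq_to_K (𝕜 := ℂ)]
        simp [Complex.add_re, Complex.mul_re, ← Complex.ofReal_pow]
        exact Or.inl hN.symm
      have hnash' := hnash u hu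
      rw [← hN] at hnash'
      have h3 : N * f (B N) ≤ N * f θ' := by
        have : c₀ * N + c * (inner ℂ (A u) u : ℂ).re = N * (f θ' - c * ε) := by
          rw [← hθN, hc₀]; ring_nf; nlinarith [hθN]
        nlinarith [hnash', hcomp, hexpand, this, mul_nonneg (mul_nonneg hn2.le hcnn) hε.le]
      have h4 : f (B N) ≤ f θ' := le_of_mul_le_mul_left h3 hn2
      by_contra h
      push_neg at h
      exact absurd h4 (not_le.mpr (hfmono θ' (B N) hθ'pos.le h))
    have hBθ : B N ≤ θ := le_of_forall_pos_le_add hkey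
    calc N * B N ≤ N * θ := by nlinarith
      _ = (inner ℂ (A u) u : ℂ).re := by rw [mul_comm]; exact hθN
  · -- degenerate case: `cfc f A = 0`, contradiction with Nash inequality
    exfalso
    have hnash' := hnash u hu
    rw [cfc_apply_of_not_continuousOn A hcont] at hnash'
    simp only [ContinuousLinearMap.zero_apply, inner_zero_left, Complex.zero_re] at hnash'
    have hfB : 0 < f (B N) := lt_of_le_of_lt hf0 (hfmono 0 (B N) le_rfl hBN)
    rw [← hN] at hnash'
    nlinarith
end

section
/- Let β:(0,∞)→(0,∞) be decreasing with lim_{r→0}β(r)=∞ and lim_{r→∞}β(r)=0, and define B(x) = sup_{s>0} (1−β(s)/x)/s for x > 0. Then 1/(2β⁻¹(x/2)) ≤ B(x) ≤ 1/β⁻¹(x), where β⁻¹ is the generalized inverse of β; in particular B maps (0,∞) to (0,∞) and is increasing. -/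
open Set

/-- Bounds for the Legendre-type transform `B(x) = sup_{s>0}(1−β(s)/x)/s` of a
decreasing rate function `β` with `β(0+)=∞`, `β(∞)=0`:
`1/(2β⁻¹(x/2)) ≤ B(x) ≤ 1/β⁻¹(x)`, and `B` is positive and increasing. -/
theorem stmt_14 (β βinv B : ℝ → ℝ)
    (hβpos : ∀ r > (0:ℝ), 0 < β r)
    (hβdec : ∀ r s : ℝ, 0 < r → r ≤ s → β s ≤ β r)
    (hβ0 : Filter.Tendsto β (nhdsWithin 0 (Ioi 0)) Filter.atTop)
    (hβtop : Filter.Tendsto β Filter.atTop (nhds 0))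
    (hβinv : ∀ x > (0:ℝ), βinv x = sInf {s : ℝ | 0 < s ∧ β s ≤ x})
    (hB : ∀ x > (0:ℝ), B x = sSup ((fun s => (1 - β s / x) / s) '' Ioi 0)) :
    (∀ x > (0:ℝ), 1 / (2 * βinv (x/2)) ≤ B x ∧ B x ≤ 1 / βinv x) ∧
      (∀ x > (0:ℝ), 0 < B x) ∧
      (∀ x y : ℝ, 0 < x → x ≤ y → B x ≤ B y) := by
  have hSne : ∀ x > (0:ℝ), {s : ℝ | 0 < s ∧ β s ≤ x}.Nonempty := by
    intro x hx
    obtain ⟨s, hs1, hs2⟩ := ((hβtop.eventually_lt_const hx).and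
      (Filter.eventually_gt_atTop 0)).exists
    exact ⟨s, hs2, hs1.le⟩
  have hSlb : ∀ x > (0:ℝ), ∃ u > (0:ℝ), u ∈ lowerBounds {s : ℝ | 0 < s ∧ β s ≤ x} := by
    intro x hx
    have h := hβ0.eventually (Filter.eventually_gt_atTop x)
    rw [Filter.eventually_iff, mem_nhdsGT_iff_exists_Ioo_subset] at h
    obtain ⟨u, hu, hsub⟩ := h
    refine ⟨u, hu, fun s hs => ?_⟩
    by_contra hlt
    push_neg at hlt
    exact absurd hs.2 (not_le.mpr (hsub ⟨hs.1, hlt⟩))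
  have hinvpos : ∀ x > (0:ℝ), 0 < βinv x := by
    intro x hx
    obtain ⟨u, hu, hlb⟩ := hSlb x hx
    rw [hβinv x hx]
    exact lt_of_lt_of_le hu (le_csInf (hSne x hx) hlb)
  have hinvle : ∀ x > (0:ℝ), ∀ s, 0 < s → β s ≤ x → βinv x ≤ s := by
    intro x hx s hs hβs
    obtain ⟨u, _, hlb⟩ := hSlb x hx
    rw [hβinv x hx]
    exact csInf_le ⟨u, hlb⟩ ⟨hs, hβs⟩
  have hpt : ∀ x > (0:ℝ), ∀ s > (0:ℝ), (1 - β s / x) / s ≤ 1 / βinv x := by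
    intro x hx s hs
    by_cases h : β s ≤ x
    · have h1 : βinv x ≤ s := hinvle x hx s hs h
      have h2 : 0 < βinv x := hinvpos x hx
      have h3 : 1 - β s / x ≤ 1 := by
        have := div_nonneg (hβpos s hs).le hx.le
        linarith
      calc (1 - β s / x) / s ≤ 1 / s := by gcongr
        _ ≤ 1 / βinv x := by
            apply one_div_le_one_div_of_le h2 h1
    · push_neg at h
      have h1 : 1 - β s / x < 0 := by
        have : 1 < β s / x := (one_lt_div hx).mpr h
        linarith
      have h2 : (1 - β s / x) / s ≤ 0 := div_nonpos_of_nonpos_of_nonneg h1.le hs.le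
      exact h2.trans (one_div_nonneg.mpr (hinvpos x hx).le)
  have hbdd : ∀ x > (0:ℝ), BddAbove ((fun s => (1 - β s / x) / s) '' Ioi 0) := by
    intro x hx
    refine ⟨1 / βinv x, fun a ha => ?_⟩
    obtain ⟨s, hs, rfl⟩ := ha
    exact hpt x hx s hs
  have htermle : ∀ x > (0:ℝ), ∀ s > (0:ℝ), (1 - β s / x) / s ≤ B x := by
    intro x hx s hs
    rw [hB x hx]
    exact le_csSup (hbdd x hx) ⟨s, hs, rfl⟩
  have hBpos : ∀ x > (0:ℝ), 0 < B x := by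
    intro x hx
    obtain ⟨s, hs, hβs⟩ := hSne (x/2) (by linarith)
    have h1 : β s / x ≤ 1/2 := by
      rw [div_le_iff₀ hx]
      linarith
    have h2 : (0:ℝ) < (1 - β s / x) / s := by
      apply div_pos (by linarith) hs
    exact h2.trans_le (htermle x hx s hs)
  have hBub : ∀ x > (0:ℝ), B x ≤ 1 / βinv x := by
    intro x hx
    rw [hB x hx]
    apply Real.sSup_le
    · rintro a ⟨s, hs, rfl⟩
      exact hpt x hx s hs
    · exact one_div_nonneg.mpr (hinvpos x hx).le
  refine ⟨fun x hx => ⟨?_, hBub x hx⟩, hBpos, ?_⟩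
  · -- lower bound
    have hx2 : (0:ℝ) < x/2 := by linarith
    have hBx := hBpos x hx
    have hlb : 1 / (2 * B x) ≤ βinv (x/2) := by
      rw [hβinv (x/2) hx2]
      apply le_csInf (hSne (x/2) hx2)
      rintro s ⟨hs, hβs⟩
      have h1 : β s / x ≤ 1/2 := by
        rw [div_le_iff₀ hx]; linarith
      have h2 : (1/2 : ℝ) / s ≤ (1 - β s / x) / s := by gcongr; linarith
      have h3 : (1/2 : ℝ) / s ≤ B x := h2.trans (htermle x hx s hs)
      rw [div_le_iff₀ hs] at h3
      rw [div_le_iff₀ (by linarith : (0:ℝ) < 2 * B x)]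
      nlinarith
    have hpos : (0:ℝ) < 1 / (2 * B x) := by positivity
    have h2 : (0:ℝ) < βinv (x/2) := lt_of_lt_of_le hpos hlb
    rw [div_le_iff₀ (by linarith : (0:ℝ) < 2 * βinv (x/2))]
    rw [div_le_iff₀ (by linarith : (0:ℝ) < 2 * B x)] at hlb
    nlinarith
  · -- monotone
    intro x y hx hxy
    have hy : (0:ℝ) < y := lt_of_lt_of_le hx hxy
    rw [hB x hx]
    apply Real.sSup_le
    · rintro a ⟨s, hs, rfl⟩
      have hs' : (0:ℝ) < s := hs
      have h1 : β s / y ≤ β s / x :=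
        div_le_div_of_nonneg_left (hβpos s hs).le hx hxy
      have h2 : (1 - β s / x) / s ≤ (1 - β s / y) / s := by gcongr <;> linarith
      exact h2.trans (htermle y hy s hs)
    · exact (hBpos y hy).le
end

section
/- Let Θ₀:(0,∞)→(0,∞) be strictly increasing with Θ₀(0+)=0 and Θ₀(∞)=∞, given by Θ₀(x) = (x/2)·f(1/(2β⁻¹(x/4))), where f is increasing and β decreasing with decreasing inverse β⁻¹. Then for any r > 0, sup{Θ₀⁻¹(s) − r·s : s > 0} ≤ 4β(1/(2f⁻¹(2/r))). -/
open Set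

/-- Bound on the Legendre-type transform of `Θ₀⁻¹` where
`Θ₀(x) = (x/2)·f(1/(2β⁻¹(x/4)))`:
for all `r > 0`, `sup_{s>0}(Θ₀⁻¹(s) − r·s) ≤ 4β(1/(2f⁻¹(2/r)))`. -/
theorem stmt_16 (f finv β βinv Θ₀ Θinv : ℝ → ℝ)
    -- f is strictly increasing and positive on (0,∞), with inverse finv:
    (hfpos : ∀ x > (0:ℝ), 0 < f x)
    (hfmono : StrictMonoOn f (Ioi 0))
    (hfinv : ∀ x > (0:ℝ), finv (f x) = x ∧ 0 < finv x ∧ f (finv x) = x)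
    -- β is strictly decreasing and positive with limits ∞ at 0 and 0 at ∞,
    -- and βinv is its (decreasing) inverse:
    (hβpos : ∀ r > (0:ℝ), 0 < β r)
    (hβdec : StrictAntiOn β (Ioi 0))
    (hβ0 : Filter.Tendsto β (nhdsWithin 0 (Ioi 0)) Filter.atTop)
    (hβtop : Filter.Tendsto β Filter.atTop (nhds 0))
    (hβinv : ∀ x > (0:ℝ), βinv (β x) = x ∧ 0 < βinv x ∧ β (βinv x) = x)
    -- Θ₀ and its inverse Θinv:
    (hΘ₀ : ∀ x > (0:ℝ), Θ₀ x = (x/2) * f (1 / (2 * βinv (x/4))))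
    (hΘ₀mono : StrictMonoOn Θ₀ (Ioi 0))
    (hΘ₀0 : Filter.Tendsto Θ₀ (nhdsWithin 0 (Ioi 0)) (nhds 0))
    (hΘ₀top : Filter.Tendsto Θ₀ Filter.atTop Filter.atTop)
    (hΘinv : ∀ x > (0:ℝ), Θinv (Θ₀ x) = x ∧ 0 < Θinv x ∧ Θ₀ (Θinv x) = x) :
    ∀ r > (0:ℝ), ∀ s > (0:ℝ),
      Θinv s - r * s ≤ 4 * β (1 / (2 * finv (2/r))) := by
  intro r hr s hs
  obtain ⟨-, hx, hΘx⟩ := hΘinv s hs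
  set x := Θinv s with hxdef
  have h2r : (0:ℝ) < 2 / r := by positivity
  obtain ⟨-, hc, hfc⟩ := hfinv (2 / r) h2r
  set c := finv (2 / r) with hcdef
  have hcinv : (0:ℝ) < 1 / (2 * c) := by positivity
  have hMpos : 0 < 4 * β (1 / (2 * c)) := by
    have := hβpos _ hcinv; linarith
  by_cases hxM : x ≤ 4 * β (1 / (2 * c))
  · have : 0 < r * s := by positivity
    linarith
  · push_neg at hxM
    have hx4 : (0:ℝ) < x / 4 := by linarith
    obtain ⟨-, hb, hβb⟩ := hβinv (x / 4) hx4
    set b := βinv (x / 4) with hbdef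
    -- β b = x/4 > β (1/(2c)), so b < 1/(2c)
    have hblt : b < 1 / (2 * c) := by
      by_contra hle
      push_neg at hle
      have := (hβdec.le_iff_ge hb hcinv).mpr hle
      rw [hβb] at this
      linarith
    have harg : c < 1 / (2 * b) := by
      rw [lt_div_iff₀ (by linarith)]
      rw [lt_div_iff₀ (by linarith)] at hblt
      nlinarith
    have hfgt : 2 / r < f (1 / (2 * b)) := by
      have := hfmono (mem_Ioi.mpr hc) (mem_Ioi.mpr (by positivity)) harg
      rwa [hfc] at this
    have hseq : s = (x / 2) * f (1 / (2 * b)) := by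
      rw [← hΘx, hΘ₀ x hx]
    have hsgt : x / r < s := by
      rw [hseq]
      have h1 : (x / 2) * (2 / r) < (x / 2) * f (1 / (2 * b)) := by
        apply mul_lt_mul_of_pos_left hfgt (by linarith)
      calc x / r = (x / 2) * (2 / r) := by field_simp
        _ < _ := h1
    have : x < r * s := by
      rw [div_lt_iff₀ hr] at hsgt
      linarith [mul_comm s r]
    linarith
end

section
/- Let α:(0,∞)→(0,∞) be decreasing, f:(0,∞)→(0,∞) strictly increasing, and define Θ₀(x) = (x/2)·f(1/(2α(x/4))), a strictly increasing bijection of (0,∞). Then for every r > 0, sup{(Θ₀⁻¹(s) − r)/s : s > 0} ≤ 2/f(1/(2α(r/4))). -/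
open Set

/-- Bound for the weak-Poincaré rate function: with
`Θ₀(x) = (x/2)·f(1/(2α(x/4)))` a strictly increasing bijection of `(0,∞)`,
for every `r > 0`, `sup_{s>0}(Θ₀⁻¹(s) − r)/s ≤ 2/f(1/(2α(r/4)))`. -/
theorem stmt_17 (f α Θ₀ Θinv : ℝ → ℝ)
    -- α is decreasing and positive on (0,∞):
    (hαpos : ∀ r > (0:ℝ), 0 < α r)
    (hαdec : ∀ r s : ℝ, 0 < r → r ≤ s → α s ≤ α r)
    -- f is strictly increasing and positive on (0,∞):
    (hfpos : ∀ x > (0:ℝ), 0 < f x)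
    (hfmono : StrictMonoOn f (Ioi 0))
    -- Θ₀ and its inverse Θinv on (0,∞):
    (hΘ₀ : ∀ x > (0:ℝ), Θ₀ x = (x/2) * f (1 / (2 * α (x/4))))
    (hΘ₀mono : StrictMonoOn Θ₀ (Ioi 0))
    (hΘ₀bij : BijOn Θ₀ (Ioi 0) (Ioi 0))
    (hΘinv : ∀ x > (0:ℝ), Θinv (Θ₀ x) = x ∧ 0 < Θinv x ∧ Θ₀ (Θinv x) = x) :
    ∀ r > (0:ℝ), ∀ s > (0:ℝ),
      (Θinv s - r) / s ≤ 2 / f (1 / (2 * α (r/4))) := by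
  intro r hr s hs
  obtain ⟨_, hxpos, hfix⟩ := hΘinv s hs
  set x := Θinv s with hx
  have hαr : 0 < α (r/4) := hαpos _ (by linarith)
  have hargr : (0:ℝ) < 1 / (2 * α (r/4)) := by positivity
  have hfr : 0 < f (1 / (2 * α (r/4))) := hfpos _ hargr
  rcases le_or_gt x r with hle | hlt
  · have : (x - r) / s ≤ 0 := div_nonpos_of_nonpos_of_nonneg (by linarith) hs.le
    exact this.trans (by positivity)
  · have hαx : 0 < α (x/4) := hαpos _ (by linarith)
    have hargx : (0:ℝ) < 1 / (2 * α (x/4)) := by positivity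
    have hfx : 0 < f (1 / (2 * α (x/4))) := hfpos _ hargx
    have hαle : α (x/4) ≤ α (r/4) := hαdec _ _ (by linarith) (by linarith)
    have hargle : 1 / (2 * α (r/4)) ≤ 1 / (2 * α (x/4)) := by
      apply one_div_le_one_div_of_le (by positivity)
      linarith
    have hfle : f (1 / (2 * α (r/4))) ≤ f (1 / (2 * α (x/4))) :=
      hfmono.monotoneOn hargr hargx hargle
    have hseq : s = (x/2) * f (1 / (2 * α (x/4))) := by
      rw [← hfix, hΘ₀ x hxpos]
    have h1 : (x - r) / s ≤ x / s := by gcongr; linarith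
    have h2 : x / s = 2 / f (1 / (2 * α (x/4))) := by
      rw [hseq]
      field_simp
    have h3 : 2 / f (1 / (2 * α (x/4))) ≤ 2 / f (1 / (2 * α (r/4))) := by
      gcongr
    linarith
end

section
/- Let ν be a nonnegative measure on (0,∞) with ∫min(1,t)ν(dt)<∞ and let f(x)=∫(1−e^{-tx})ν(dt). Let B:(0,∞)→(0,∞) be increasing, G(t)=∫_1^t ds/(2sB(s)) (signed convention), and g(r)=∫_0^r ν(2(G(r)−G(u)),∞)du. Then for every ε∈(0,1) and r>0: g(r) ≥ (1−ε)·r·f(εB(εr)/(1−ε)). -/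
open Set MeasureTheory intervalIntegral
open scoped ENNReal NNReal
set_option maxHeartbeats 1000000

private lemma aux_fin (ν : Measure ℝ)
    (hlevy : ∫⁻ t in Ioi (0:ℝ), ENNReal.ofReal (min 1 t) ∂ν < ⊤)
    {δ : ℝ} (hδ : 0 < δ) : ν (Ioi δ) < ⊤ := by
  have h1 : ENNReal.ofReal (min 1 δ) * ν (Ioi δ)
      = ∫⁻ _ in Ioi δ, ENNReal.ofReal (min 1 δ) ∂ν := by
    rw [setLIntegral_const, mul_comm]
  have h2 : ∫⁻ _ in Ioi δ, ENNReal.ofReal (min 1 δ) ∂ν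
      ≤ ∫⁻ t in Ioi δ, ENNReal.ofReal (min 1 t) ∂ν := by
    refine lintegral_mono_ae ?_
    filter_upwards [ae_restrict_mem measurableSet_Ioi] with t ht
    exact ENNReal.ofReal_le_ofReal (min_le_min le_rfl ht.le)
  have h3 : ∫⁻ t in Ioi δ, ENNReal.ofReal (min 1 t) ∂ν
      ≤ ∫⁻ t in Ioi (0:ℝ), ENNReal.ofReal (min 1 t) ∂ν :=
    lintegral_mono_set (Ioi_subset_Ioi hδ.le)
  have h4 : ENNReal.ofReal (min 1 δ) * ν (Ioi δ) < ⊤ := by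
    rw [h1]; exact lt_of_le_of_lt (h2.trans h3) hlevy
  have hne : ENNReal.ofReal (min 1 δ) ≠ 0 := by
    simp only [ne_eq, ENNReal.ofReal_eq_zero, not_le]
    exact lt_min one_pos hδ
  rcases eq_or_ne (ν (Ioi δ)) ⊤ with h | h
  · rw [h, ENNReal.mul_top hne] at h4
    exact absurd h4 (lt_irrefl _)
  · exact h.lt_top

private lemma aux_layer (ν : Measure ℝ) {k M : ℝ} (hk : 0 < k) (hM : 0 < M) :
    ∫⁻ v in Ioo (0:ℝ) M, ν (Ioi (v / k))
      = ∫⁻ t in Ioi (0:ℝ), ENNReal.ofReal (min M (t * k)) ∂ν := by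
  set μ := ν.restrict (Ioi (0:ℝ)) with hμ
  have f_nn : 0 ≤ᵐ[μ] fun t => min M (t * k) := by
    filter_upwards [ae_restrict_mem measurableSet_Ioi] with t ht
    exact le_min hM.le (mul_nonneg (le_of_lt ht) hk.le)
  have f_mble : AEMeasurable (fun t => min M (t * k)) μ :=
    (measurable_const.min (measurable_id.mul_const k)).aemeasurable
  have key := lintegral_eq_lintegral_meas_lt μ f_nn f_mble
  have h2 : ∫⁻ v in Ioi (0:ℝ), μ {t | v < min M (t * k)}
      = ∫⁻ v in Ioi (0:ℝ), (Iio M).indicator (fun v => ν (Ioi (v / k))) v := by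
    refine setLIntegral_congr_fun measurableSet_Ioi (fun v hv => ?_)
    by_cases hvM : v < M
    · have hset : {t : ℝ | v < min M (t * k)} = Ioi (v / k) := by
        ext t
        simp only [mem_setOf_eq, lt_min_iff, mem_Ioi]
        constructor
        · rintro ⟨-, h⟩
          exact (div_lt_iff₀ hk).2 h
        · intro h
          exact ⟨hvM, (div_lt_iff₀ hk).1 h⟩
      rw [hset, indicator_of_mem (show v ∈ Iio M from hvM), hμ, Measure.restrict_apply measurableSet_Ioi,
        inter_eq_self_of_subset_left (Ioi_subset_Ioi (div_pos hv hk).le)]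
    · have hset : {t : ℝ | v < min M (t * k)} = ∅ := by
        ext t
        simp only [mem_setOf_eq, lt_min_iff, mem_empty_iff_false, iff_false, not_and]
        intro h
        exact absurd h hvM
      rw [hset, indicator_of_notMem (show v ∉ Iio M from hvM), measure_empty]
  have h3 : ∫⁻ v in Ioi (0:ℝ), (Iio M).indicator (fun v => ν (Ioi (v / k))) v
      = ∫⁻ v in Ioo (0:ℝ) M, ν (Ioi (v / k)) := by
    rw [lintegral_indicator measurableSet_Iio, Measure.restrict_restrict measurableSet_Iio]
    congr 1
    rw [inter_comm, Ioi_inter_Iio]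
  conv_rhs => rw [key]
  rw [h2, h3]

private lemma aux_min_le {M k t : ℝ} (hM : 0 < M) (hk : 0 < k) (ht : 0 < t) :
    min M (t * k) ≤ max M k * min 1 t := by
  rcases le_total t 1 with h | h
  · rw [min_eq_right h]
    calc min M (t * k) ≤ t * k := min_le_right _ _
      _ = k * t := mul_comm _ _
      _ ≤ max M k * t := mul_le_mul_of_nonneg_right (le_max_right _ _) ht.le
  · rw [min_eq_left h]
    calc min M (t * k) ≤ M := min_le_left _ _
      _ ≤ max M k := le_max_left _ _
      _ = max M k * 1 := (mul_one _).symm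

private lemma aux_fin2 (ν : Measure ℝ)
    (hlevy : ∫⁻ t in Ioi (0:ℝ), ENNReal.ofReal (min 1 t) ∂ν < ⊤)
    {k M : ℝ} (hk : 0 < k) (hM : 0 < M) :
    ∫⁻ t in Ioi (0:ℝ), ENNReal.ofReal (min M (t * k)) ∂ν < ⊤ := by
  have hle : ∫⁻ t in Ioi (0:ℝ), ENNReal.ofReal (min M (t * k)) ∂ν
      ≤ ∫⁻ t in Ioi (0:ℝ), ENNReal.ofReal (max M k) * ENNReal.ofReal (min 1 t) ∂ν := by
    refine lintegral_mono_ae ?_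
    filter_upwards [ae_restrict_mem measurableSet_Ioi] with t ht
    rw [← ENNReal.ofReal_mul (le_max_of_le_left hM.le)]
    exact ENNReal.ofReal_le_ofReal (aux_min_le hM hk ht)
  rw [lintegral_const_mul' _ _ ENNReal.ofReal_ne_top] at hle
  exact lt_of_le_of_lt hle (ENNReal.mul_lt_top ENNReal.ofReal_lt_top hlevy)

private lemma aux_refl (F : ℝ → ℝ≥0∞) (r a b : ℝ) :
    ∫⁻ u in Ioo a b, F u = ∫⁻ v in Ioo (r - b) (r - a), F (r - v) := by
  have h0 : ∀ v : ℝ, (Ioo a b).indicator F (r - v)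
      = (Ioo (r - b) (r - a)).indicator (fun w => F (r - w)) v := by
    intro v
    by_cases hv : v ∈ Ioo (r - b) (r - a)
    · rw [indicator_of_mem hv]
      have hmem : r - v ∈ Ioo a b := ⟨by linarith [hv.2], by linarith [hv.1]⟩
      rw [indicator_of_mem hmem]
    · rw [indicator_of_notMem hv]
      have hmem : r - v ∉ Ioo a b := by
        intro hmem
        exact hv ⟨by linarith [hmem.2], by linarith [hmem.1]⟩
      rw [indicator_of_notMem hmem]
  have hmp : MeasurePreserving (fun v : ℝ => r - v) volume volume :=
    Measure.measurePreserving_sub_left volume r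
  calc ∫⁻ u in Ioo a b, F u = ∫⁻ u, (Ioo a b).indicator F u :=
        (lintegral_indicator measurableSet_Ioo F).symm
    _ = ∫⁻ v, (Ioo a b).indicator F (r - v) :=
        hmp.lintegral_map_equiv ((Ioo a b).indicator F) (MeasurableEquiv.subLeft r)
    _ = ∫⁻ v, (Ioo (r - b) (r - a)).indicator (fun w => F (r - w)) v :=
        lintegral_congr h0
    _ = ∫⁻ v in Ioo (r - b) (r - a), F (r - v) :=
        lintegral_indicator measurableSet_Ioo _

/-- ε-refined lower bound for `g(r) = ∫_0^r ν(2(G(r)-G(u)),∞) du`: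
for every `ε ∈ (0,1)` and `r > 0`, `g(r) ≥ (1−ε)·r·f(εB(εr)/(1−ε))`,
where `f` is the Bernstein function with Lévy measure `ν`. -/
theorem stmt_18 (ν : Measure ℝ) (f B G g : ℝ → ℝ)
    (hlevy : ∫⁻ t in Ioi (0:ℝ), ENNReal.ofReal (min 1 t) ∂ν < ⊤)
    (hsupp : ν (Iic (0:ℝ)) = 0)
    (hf : ∀ x : ℝ, f x = ∫ t in Ioi (0:ℝ), (1 - Real.exp (-(t * x))) ∂ν)
    (hBpos : ∀ x > (0:ℝ), 0 < B x)
    (hBmono : ∀ x y : ℝ, 0 < x → x ≤ y → B x ≤ B y)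
    (hG : ∀ t : ℝ, G t = ∫ s in (1:ℝ)..t, 1 / (2 * s * B s))
    (hg : ∀ r : ℝ, g r = ∫ u in (0:ℝ)..r, (ν (Ioi (2 * (G r - G u)))).toReal) :
    ∀ ε : ℝ, 0 < ε → ε < 1 → ∀ r > (0:ℝ),
      (1 - ε) * r * f (ε * B (ε * r) / (1 - ε)) ≤ g r := by
  intro ε hε hε1 r hr
  have h1ε : (0:ℝ) < 1 - ε := by linarith
  set a := ε * r with ha
  have hapos : 0 < a := mul_pos hε hr
  have har : a < r := by rw [ha]; nlinarith
  have hBa : 0 < B a := hBpos a hapos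
  have hBr : 0 < B r := hBpos r hr
  set L := (1 - ε) * r with hL
  have hLpos : 0 < L := mul_pos h1ε hr
  set x := ε * B a / (1 - ε) with hx
  have hxpos : 0 < x := div_pos (mul_pos hε hBa) h1ε
  set K := a * B a with hK
  have hKpos : 0 < K := mul_pos hapos hBa
  have hLx : L * x = K := by
    rw [hx, hL, hK, ha]
    field_simp
  -- interval integrability of the integrand of G
  have hII : ∀ p q : ℝ, 0 < p → p ≤ q →
      IntervalIntegrable (fun s => 1 / (2 * s * B s)) volume p q := by
    intro p q hp hpq
    rw [intervalIntegrable_iff_integrableOn_Ioc_of_le hpq]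
    have hBmeas : Measurable fun s => B (max s p) := by
      refine Monotone.measurable fun s t hst => ?_
      exact hBmono _ _ (lt_of_lt_of_le hp (le_max_right s p)) (max_le_max hst le_rfl)
    have hmeas : Measurable fun s => 1 / (2 * s * B (max s p)) :=
      measurable_const.div ((measurable_const.mul measurable_id).mul hBmeas)
    refine Integrable.mono' (g := fun _ => 1 / (2 * p * B p))
      (integrableOn_const measure_Ioc_lt_top.ne) ?_ ?_
    · refine hmeas.aestronglyMeasurable.congr ?_
      filter_upwards [ae_restrict_mem measurableSet_Ioc] with s hs
      rw [max_eq_left hs.1.le]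
    · filter_upwards [ae_restrict_mem measurableSet_Ioc] with s hs
      have hps : p < s := hs.1
      have hs0 : 0 < s := hp.trans hps
      have hBs : 0 < B s := hBpos s hs0
      have h1 : 0 < 2 * p * B p := mul_pos (mul_pos two_pos hp) (hBpos p hp)
      have h2 : 2 * p * B p ≤ 2 * s * B s := by
        have := hBmono p s hp hps.le
        nlinarith
      have hpos : 0 < 1 / (2 * s * B s) :=
        div_pos one_pos (mul_pos (mul_pos two_pos hs0) hBs)
      rw [Real.norm_eq_abs, abs_of_pos hpos]
      exact one_div_le_one_div_of_le h1 h2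
  have hII' : ∀ p q : ℝ, 0 < p → 0 < q →
      IntervalIntegrable (fun s => 1 / (2 * s * B s)) volume p q := by
    intro p q hp hq
    rcases le_total p q with h | h
    · exact hII p q hp h
    · exact (hII q p hq h).symm
  have hGdiff : ∀ p q : ℝ, 0 < p → 0 < q →
      G q - G p = ∫ s in p..q, 1 / (2 * s * B s) := by
    intro p q hp hq
    have h := integral_add_adjacent_intervals (hII' 1 p one_pos hp) (hII' p q hp hq)
    rw [hG q, hG p, ← h]
    ring
  have hGub : ∀ p q : ℝ, 0 < p → p ≤ q →
      (∫ s in p..q, 1 / (2 * s * B s)) ≤ (q - p) * (1 / (2 * p * B p)) := by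
    intro p q hp hpq
    have hc : ∫ s in p..q, 1 / (2 * p * B p) = (q - p) * (1 / (2 * p * B p)) := by
      rw [intervalIntegral.integral_const, smul_eq_mul]
    rw [← hc]
    refine integral_mono_on hpq (hII p q hp hpq) intervalIntegrable_const fun s hs => ?_
    have hps : p ≤ s := hs.1
    have hs0 : 0 < s := lt_of_lt_of_le hp hps
    have hBs : 0 < B s := hBpos s hs0
    have h1 : 0 < 2 * p * B p := mul_pos (mul_pos two_pos hp) (hBpos p hp)
    refine one_div_le_one_div_of_le h1 ?_
    have := hBmono p s hp hps
    nlinarith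
  have hGlb : ∀ p q : ℝ, 0 < p → p ≤ q →
      (q - p) * (1 / (2 * q * B q)) ≤ ∫ s in p..q, 1 / (2 * s * B s) := by
    intro p q hp hpq
    have hq0 : 0 < q := lt_of_lt_of_le hp hpq
    have hBq : 0 < B q := hBpos q hq0
    have hc : ∫ s in p..q, 1 / (2 * q * B q) = (q - p) * (1 / (2 * q * B q)) := by
      rw [intervalIntegral.integral_const, smul_eq_mul]
    rw [← hc]
    refine integral_mono_on hpq intervalIntegrable_const (hII p q hp hpq) fun s hs => ?_
    have hs0 : 0 < s := lt_of_lt_of_le hp hs.1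
    have hBs : 0 < B s := hBpos s hs0
    have h1 : 0 < 2 * s * B s := mul_pos (mul_pos two_pos hs0) hBs
    refine one_div_le_one_div_of_le h1 ?_
    have hbq := hBmono s q hs0 hs.2
    nlinarith [hBs, hs.2, hbq, hs0, hq0, hBq]
  have hGmono : ∀ p q : ℝ, 0 < p → p ≤ q → G p ≤ G q := by
    intro p q hp hpq
    have hq0 : 0 < q := lt_of_lt_of_le hp hpq
    have hd := hGdiff p q hp hq0
    have hlb := hGlb p q hp hpq
    have hBq : 0 < B q := hBpos q hq0
    have hpos : 0 ≤ (q - p) * (1 / (2 * q * B q)) := by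
      have : 0 < 1 / (2 * q * B q) :=
        div_pos one_pos (mul_pos (mul_pos two_pos hq0) hBq)
      nlinarith
    linarith
  set φ : ℝ → ℝ≥0∞ := fun u => ν (Ioi (2 * (G r - G u))) with hφ
  have hφapp : ∀ u : ℝ, ν (Ioi (2 * (G r - G u))) = φ u := fun _ => rfl
  have hφmono : MonotoneOn φ (Ioi (0:ℝ)) := by
    intro u hu v hv huv
    refine measure_mono (Ioi_subset_Ioi ?_)
    have := hGmono u v hu huv
    linarith
  -- key pointwise bounds
  have hkey1 : ∀ u : ℝ, 0 < u → u < r → (r - u) / (r * B r) ≤ 2 * (G r - G u) := by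
    intro u hu hur
    have hd := hGdiff u r hu hr
    have hlb := hGlb u r hu hur.le
    have hne : r * B r ≠ 0 := ne_of_gt (mul_pos hr hBr)
    have hcalc : (r - u) / (r * B r) = 2 * ((r - u) * (1 / (2 * r * B r))) := by
      field_simp
    rw [hcalc]
    have : (r - u) * (1 / (2 * r * B r)) ≤ G r - G u := by rw [hd]; exact hlb
    linarith
  have hkey2 : ∀ v : ℝ, 0 < v → v < L → 2 * (G r - G (r - v)) ≤ v / K := by
    intro v hv hvL
    have hu : a < r - v := by
      rw [hL] at hvL
      rw [ha]
      nlinarith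
    have hu0 : 0 < r - v := hapos.trans hu
    have hd := hGdiff (r - v) r hu0 hr
    have hub := hGub (r - v) r hu0 (by linarith)
    have h2 : (1:ℝ) / (2 * (r - v) * B (r - v)) ≤ 1 / (2 * a * B a) := by
      refine one_div_le_one_div_of_le (mul_pos (mul_pos two_pos hapos) hBa) ?_
      have := hBmono a (r - v) hapos hu.le
      nlinarith
    have hcalc : v / K = 2 * (v * (1 / (2 * a * B a))) := by
      rw [hK]
      field_simp
    rw [hcalc]
    have hmain : G r - G (r - v) ≤ v * (1 / (2 * a * B a)) := by
      rw [hd]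
      refine le_trans hub ?_
      have hrr : r - (r - v) = v := by ring
      rw [hrr]
      exact mul_le_mul_of_nonneg_left h2 hv.le
    linarith
  -- the main ENNReal quantities
  set I1 := ∫⁻ t in Ioi (0:ℝ), ENNReal.ofReal (min L (t * K)) ∂ν with hI1
  set I5 := ∫⁻ u in Ioo (0:ℝ) r, φ u with hI5
  set k2 := r * B r with hk2
  have hk2pos : 0 < k2 := mul_pos hr hBr
  -- finiteness of I5
  have hI5le : I5 ≤ ∫⁻ u in Ioo (0:ℝ) r, ν (Ioi ((r - u) / k2)) := by
    refine lintegral_mono_ae ?_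
    filter_upwards [ae_restrict_mem measurableSet_Ioo] with u hu
    exact measure_mono (Ioi_subset_Ioi (hkey1 u hu.1 hu.2))
  have hrefl1 : ∫⁻ u in Ioo (0:ℝ) r, ν (Ioi ((r - u) / k2))
      = ∫⁻ v in Ioo (0:ℝ) r, ν (Ioi (v / k2)) := by
    have h := aux_refl (fun w => ν (Ioi (w / k2))) r 0 r
    simp only [sub_self, sub_zero] at h
    exact h.symm
  have hI5fin : I5 < ⊤ := by
    calc I5 ≤ ∫⁻ u in Ioo (0:ℝ) r, ν (Ioi ((r - u) / k2)) := hI5le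
      _ = ∫⁻ v in Ioo (0:ℝ) r, ν (Ioi (v / k2)) := hrefl1
      _ = ∫⁻ t in Ioi (0:ℝ), ENNReal.ofReal (min r (t * k2)) ∂ν := aux_layer ν hk2pos hr
      _ < ⊤ := aux_fin2 ν hlevy hk2pos hr
  -- lower chain
  have step1 : I1 = ∫⁻ v in Ioo (0:ℝ) L, ν (Ioi (v / K)) := (aux_layer ν hKpos hLpos).symm
  have step2 : ∫⁻ v in Ioo (0:ℝ) L, ν (Ioi (v / K)) ≤ ∫⁻ v in Ioo (0:ℝ) L, φ (r - v) := by
    refine lintegral_mono_ae ?_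
    filter_upwards [ae_restrict_mem measurableSet_Ioo] with v hv
    exact measure_mono (Ioi_subset_Ioi (hkey2 v hv.1 hv.2))
  have step3 : ∫⁻ v in Ioo (0:ℝ) L, φ (r - v) = ∫⁻ u in Ioo (r - L) r, φ u := by
    have h := aux_refl φ r (r - L) r
    simp only [sub_self, sub_sub_cancel] at h
    exact h.symm
  have step4 : ∫⁻ u in Ioo (r - L) r, φ u ≤ I5 := by
    refine lintegral_mono_set (Ioo_subset_Ioo_left ?_)
    rw [hL]
    nlinarith
  have hI1le5 : I1 ≤ I5 := by
    rw [step1]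
    calc ∫⁻ v in Ioo (0:ℝ) L, ν (Ioi (v / K)) ≤ ∫⁻ v in Ioo (0:ℝ) L, φ (r - v) := step2
      _ = ∫⁻ u in Ioo (r - L) r, φ u := step3
      _ ≤ I5 := step4
  -- identify g r with I5.toReal
  have hφmeas : AEMeasurable φ (volume.restrict (Ioo (0:ℝ) r)) :=
    aemeasurable_restrict_of_monotoneOn measurableSet_Ioo
      (hφmono.mono Ioo_subset_Ioi_self)
  have hφfin : ∀ᵐ u ∂(volume.restrict (Ioo (0:ℝ) r)), φ u < ⊤ := by
    filter_upwards [ae_restrict_mem measurableSet_Ioo] with u hu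
    refine lt_of_le_of_lt (measure_mono (Ioi_subset_Ioi (hkey1 u hu.1 hu.2))) ?_
    exact aux_fin ν hlevy (div_pos (by linarith [hu.2]) hk2pos)
  have hI5toReal : I5.toReal = ∫ u in Ioo (0:ℝ) r, (φ u).toReal :=
    (integral_toReal hφmeas hφfin).symm
  have hgr : g r = ∫ u in Ioo (0:ℝ) r, (φ u).toReal := by
    rw [hg r, intervalIntegral.integral_of_le hr.le, integral_Ioc_eq_integral_Ioo]
  -- left-hand side bound
  have hfle : L * f x ≤ I1.toReal := by
    rw [hf x, ← MeasureTheory.integral_const_mul]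
    have hnn : 0 ≤ᵐ[ν.restrict (Ioi (0:ℝ))] fun t => L * (1 - Real.exp (-(t * x))) := by
      filter_upwards [ae_restrict_mem measurableSet_Ioi] with t ht
      have hexp : Real.exp (-(t * x)) ≤ 1 := by
        rw [← Real.exp_zero]
        exact Real.exp_le_exp.2 (by nlinarith [mem_Ioi.mp ht, hxpos])
      have : (0:ℝ) ≤ 1 - Real.exp (-(t * x)) := by linarith
      exact mul_nonneg hLpos.le this
    have hmeas : AEStronglyMeasurable (fun t => L * (1 - Real.exp (-(t * x))))
        (ν.restrict (Ioi (0:ℝ))) := by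
      refine Continuous.aestronglyMeasurable ?_
      exact continuous_const.mul (continuous_const.sub
        (Real.continuous_exp.comp (continuous_id.mul continuous_const).neg))
    rw [integral_eq_lintegral_of_nonneg_ae hnn hmeas]
    refine ENNReal.toReal_mono (lt_of_le_of_lt hI1le5 hI5fin).ne ?_
    refine lintegral_mono_ae ?_
    filter_upwards [ae_restrict_mem measurableSet_Ioi] with t ht
    refine ENNReal.ofReal_le_ofReal (le_min ?_ ?_)
    · have : 1 - Real.exp (-(t * x)) ≤ 1 := by
        have := Real.exp_pos (-(t * x))
        linarith
      exact mul_le_of_le_one_right hLpos.le this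
    · have h1 : 1 - Real.exp (-(t * x)) ≤ t * x := by
        have := Real.add_one_le_exp (-(t * x))
        linarith
      calc L * (1 - Real.exp (-(t * x))) ≤ L * (t * x) :=
            mul_le_mul_of_nonneg_left h1 hLpos.le
        _ = t * (L * x) := by ring
        _ = t * K := by rw [hLx]
  calc L * f x ≤ I1.toReal := hfle
    _ ≤ I5.toReal := ENNReal.toReal_mono hI5fin.ne hI1le5
    _ = ∫ u in Ioo (0:ℝ) r, (φ u).toReal := hI5toReal
    _ = g r := hgr.symm
end

section
/- Let ν be a nonnegative measure on (0,∞) with ∫min(1,t)ν(dt)<∞, f(x)=∫(1−e^{-tx})ν(dt), B:(0,∞)→(0,∞) increasing, G(t)=∫_1^t ds/(2sB(s)) (signed convention), g(r)=∫_0^r ν(2(G(r)−G(u)),∞)du. Then (e/(e−1))·r·f(B(r)) ≥ g(r) ≥ (r/2)·f(B(r/2)) for all r > 0. -/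
open Set MeasureTheory intervalIntegral
open scoped ENNReal

open Real in
lemma aux_hasDerivAt (x r t : ℝ) :
    HasDerivAt (fun t : ℝ => r * exp (-(x*t))) (-(r * x * exp (-(x*t)))) t := by
  have h1 : HasDerivAt (fun t : ℝ => -(x*t)) (-x) t := by
    exact (((hasDerivAt_id t).const_mul x).neg.congr_deriv (by ring) : HasDerivAt (fun y => -(x*y)) (-x) t)
  have := (h1.exp).const_mul r
  refine this.congr_deriv ?_
  ring

open Real in
lemma aux_intervalIntegral (x t : ℝ) :
    ∫ w in (0:ℝ)..t, x * exp (-(x*w)) = 1 - exp (-(x*t)) := by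
  have h : ∀ w ∈ Set.uIcc (0:ℝ) t,
      HasDerivAt (fun w : ℝ => -exp (-(x*w))) (x * exp (-(x*w))) w := by
    intro w _
    have := (aux_hasDerivAt x 1 w).neg
    convert this using 1
    · rfl
    · rfl
    · funext y; simp
    · ring
  have hint : IntervalIntegrable (fun w => x * exp (-(x*w))) volume 0 t :=
    (Continuous.intervalIntegrable (by continuity) 0 t)
  rw [intervalIntegral.integral_eq_sub_of_hasDerivAt h hint]
  norm_num
  ring

open Real in
lemma aux_lint_Ioo (x t : ℝ) (hx : 0 < x) (ht : 0 ≤ t) :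
    ∫⁻ w in Ioo (0:ℝ) t, ENNReal.ofReal (x * exp (-(x*w)))
      = ENNReal.ofReal (1 - exp (-(x*t))) := by
  rw [← ofReal_integral_eq_lintegral_ofReal]
  · rw [← integral_Ioc_eq_integral_Ioo, ← intervalIntegral.integral_of_le ht,
      aux_intervalIntegral]
  · exact ((continuous_const.mul
      (by continuity : Continuous fun w : ℝ => exp (-(x*w)))).integrableOn_Icc).mono_set
      Ioo_subset_Icc_self
  · exact ae_of_all _ fun w => by positivity

open Real in
lemma aux_lint_Ici (x L : ℝ) (hx : 0 < x) :
    ∫⁻ w in Ici L, ENNReal.ofReal (x * exp (-(x*w))) = ENNReal.ofReal (exp (-(x*L))) := by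
  rw [← MeasureTheory.Measure.restrict_congr_set Ioi_ae_eq_Ici]
  have hderiv : ∀ w ∈ Ici L, HasDerivAt (fun w : ℝ => -exp (-(x*w))) (x * exp (-(x*w))) w := by
    intro w _
    have := (aux_hasDerivAt x 1 w).neg
    convert this using 1
    · rfl
    · rfl
    · funext y; simp
    · ring
  have hInt : IntegrableOn (fun w : ℝ => x * exp (-(x*w))) (Ioi L) := by
    have := (exp_neg_integrableOn_Ioi L hx).const_mul x
    simpa [neg_mul, IntegrableOn] using this
  have htends : Filter.Tendsto (fun w : ℝ => -exp (-(x*w))) Filter.atTop (nhds 0) := by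
    have h1 : Filter.Tendsto (fun w : ℝ => -(x*w)) Filter.atTop Filter.atBot :=
      Filter.tendsto_neg_atTop_atBot.comp (Filter.Tendsto.const_mul_atTop hx Filter.tendsto_id)
    have := (Real.tendsto_exp_atBot.comp h1).neg
    simpa using this
  have := integral_Ioi_of_hasDerivAt_of_tendsto' hderiv hInt htends
  rw [← ofReal_integral_eq_lintegral_ofReal hInt (ae_of_all _ fun w => by positivity), this]
  norm_num

lemma aux_cov {s : Set ℝ} {F F' : ℝ → ℝ} (hs : MeasurableSet s)
    (hF' : ∀ x ∈ s, HasDerivWithinAt F (F' x) s x) (hF : InjOn F s) (g : ℝ → ℝ≥0∞) :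
    ∫⁻ x in F '' s, g x = ∫⁻ x in s, ENNReal.ofReal |F' x| * g (F x) := by
  simpa only [ContinuousLinearMap.det_toSpanSingleton] using
    MeasureTheory.lintegral_image_eq_lintegral_abs_det_fderiv_mul volume hs
      (fun x hx => (hF' x hx).hasFDerivWithinAt) hF g

open Real in
lemma aux_inj (r x : ℝ) (hr : 0 < r) (hx : 0 < x) (s : Set ℝ) :
    InjOn (fun t : ℝ => r * exp (-(x*t))) s := by
  intro a _ b _ hab
  simp only at hab
  have h1 : exp (-(x*a)) = exp (-(x*b)) := mul_left_cancel₀ (ne_of_gt hr) hab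
  have := Real.exp_injective h1
  have hx' : x ≠ 0 := ne_of_gt hx
  field_simp at this
  linarith

open Real in
lemma aux_img_Ioi (r x : ℝ) (hr : 0 < r) (hx : 0 < x) :
    (fun t : ℝ => r * exp (-(x*t))) '' (Ioi 0) = Ioo 0 r := by
  ext y
  constructor
  · rintro ⟨t, ht, rfl⟩
    simp only [mem_Ioo]
    constructor
    · positivity
    · have : exp (-(x*t)) < 1 := by
        rw [Real.exp_lt_one_iff]
        have : 0 < x*t := mul_pos hx ht
        linarith
      nlinarith
  · rintro ⟨hy0, hyr⟩
    refine ⟨Real.log (r/y) / x, ?_, ?_⟩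
    · have : 0 < Real.log (r/y) := Real.log_pos ((one_lt_div hy0).mpr hyr)
      exact div_pos this hx
    · have hx' : x ≠ 0 := ne_of_gt hx
      simp only
      rw [mul_div_cancel₀ _ hx', Real.exp_neg, Real.exp_log (div_pos hr hy0)]
      field_simp

open Real in
lemma aux_img_Ioo (r x c : ℝ) (hr : 0 < r) (hx : 0 < x) :
    (fun t : ℝ => r * exp (-(x*t))) '' (Ioo 0 c) = Ioo (r * exp (-(x*c))) r := by
  ext y
  constructor
  · rintro ⟨t, ⟨ht0, htc⟩, rfl⟩
    simp only [mem_Ioo]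
    constructor
    · have : exp (-(x*c)) < exp (-(x*t)) := by
        rw [Real.exp_lt_exp]
        have := mul_lt_mul_of_pos_left htc hx
        linarith
      nlinarith
    · have : exp (-(x*t)) < 1 := by
        rw [Real.exp_lt_one_iff]
        have : 0 < x*t := mul_pos hx ht0
        linarith
      nlinarith
  · rintro ⟨hy1, hyr⟩
    have hy0 : 0 < y := lt_trans (by positivity) hy1
    refine ⟨Real.log (r/y) / x, ⟨?_, ?_⟩, ?_⟩
    · have : 0 < Real.log (r/y) := Real.log_pos ((one_lt_div hy0).mpr hyr)
      exact div_pos this hx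
    · rw [div_lt_iff₀ hx]
      have h2 : r/y < exp (x*c) := by
        rw [div_lt_iff₀ hy0]
        have hE : 0 < exp (x*c) := Real.exp_pos _
        have h3 : r * exp (-(x*c)) < y := hy1
        rw [Real.exp_neg] at h3
        calc r = r * (exp (x*c))⁻¹ * exp (x*c) := by field_simp
          _ < y * exp (x*c) := mul_lt_mul_of_pos_right h3 hE
          _ = exp (x*c) * y := by ring
      have := (Real.log_lt_iff_lt_exp (div_pos hr hy0)).mpr h2
      linarith
    · have hx' : x ≠ 0 := ne_of_gt hx
      simp only
      rw [mul_div_cancel₀ _ hx', Real.exp_neg, Real.exp_log (div_pos hr hy0)]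
      field_simp

open Real in
lemma aux_cov_exp (r x : ℝ) (hr : 0 < r) (hx : 0 < x) (s : Set ℝ) (hs : MeasurableSet s)
    (g : ℝ → ℝ≥0∞) :
    ∫⁻ u in (fun t : ℝ => r * exp (-(x*t))) '' s, g u
      = ∫⁻ t in s, ENNReal.ofReal (r * x * exp (-(x*t))) * g (r * exp (-(x*t))) := by
  have hder : ∀ t ∈ s, HasDerivWithinAt (fun t : ℝ => r * exp (-(x*t)))
      (-(r * x * exp (-(x*t)))) s t := fun t _ => (aux_hasDerivAt x r t).hasDerivWithinAt
  rw [aux_cov hs hder (aux_inj r x hr hx s) g]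
  congr 1
  funext t
  congr 2
  rw [abs_of_nonpos (neg_nonpos.mpr (by positivity))]
  ring

open Real in
lemma aux_fubini (ν : Measure ℝ) [SigmaFinite ν] (x : ℝ) (hx : 0 < x) :
    ∫⁻ t in Ioi (0:ℝ), ENNReal.ofReal (1 - exp (-(x*t))) ∂ν
      = ∫⁻ w in Ioi (0:ℝ), ENNReal.ofReal (x * exp (-(x*w))) * ν (Ioi w) := by
  set F : ℝ → ℝ → ℝ≥0∞ := fun t w => if w < t then ENNReal.ofReal (x * exp (-(x*w))) else 0
    with hF
  have step1 : ∀ t ∈ Ioi (0:ℝ),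
      ENNReal.ofReal (1 - exp (-(x*t))) = ∫⁻ w in Ioi (0:ℝ), F t w := by
    intro t ht
    have : ∀ w : ℝ, F t w = (Iio t).indicator (fun w => ENNReal.ofReal (x * exp (-(x*w)))) w := by
      intro w
      by_cases h : w < t <;> simp [hF, h, Set.indicator_of_mem, Set.mem_Iio]
    simp_rw [this]
    rw [lintegral_indicator measurableSet_Iio, Measure.restrict_restrict measurableSet_Iio,
      Set.Iio_inter_Ioi, aux_lint_Ioo x t hx (le_of_lt ht)]
  rw [setLIntegral_congr_fun measurableSet_Ioi step1]
  have hmeas : AEMeasurable (Function.uncurry F)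
      ((ν.restrict (Ioi 0)).prod (volume.restrict (Ioi (0:ℝ)))) := by
    have : Measurable (Function.uncurry F) := by
      apply Measurable.ite (measurableSet_lt measurable_snd measurable_fst)
      · fun_prop
      · exact measurable_const
    exact this.aemeasurable
  rw [lintegral_lintegral_swap hmeas]
  apply setLIntegral_congr_fun measurableSet_Ioi
  intro w hw
  have : ∀ t : ℝ, F t w = (Ioi w).indicator (fun _ => ENNReal.ofReal (x * exp (-(x*w)))) t := by
    intro t
    by_cases h : w < t <;> simp [hF, h, Set.mem_Ioi]
  simp_rw [this]
  rw [lintegral_indicator measurableSet_Ioi, Measure.restrict_restrict measurableSet_Ioi,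
    Set.inter_eq_left.mpr (Ioi_subset_Ioi (le_of_lt hw)), setLIntegral_const]

set_option maxHeartbeats 1000000 in
/-- Two-sided bound for `g(r) = ∫_0^r ν(2(G(r)-G(u)),∞) du` in terms of the
Bernstein function `f` with Lévy measure `ν`:
`(r/2)·f(B(r/2)) ≤ g(r) ≤ (e/(e−1))·r·f(B(r))` for all `r > 0`. -/
theorem stmt_19 (ν : Measure ℝ) (f B G g : ℝ → ℝ)
    (hlevy : ∫⁻ t in Ioi (0:ℝ), ENNReal.ofReal (min 1 t) ∂ν < ⊤)
    (hsupp : ν (Iic (0:ℝ)) = 0)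
    (hf : ∀ x : ℝ, f x = ∫ t in Ioi (0:ℝ), (1 - Real.exp (-(t * x))) ∂ν)
    (hBpos : ∀ x > (0:ℝ), 0 < B x)
    (hBmono : ∀ x y : ℝ, 0 < x → x ≤ y → B x ≤ B y)
    (hG : ∀ t : ℝ, G t = ∫ s in (1:ℝ)..t, 1 / (2 * s * B s))
    (hg : ∀ r : ℝ, g r = ∫ u in (0:ℝ)..r, (ν (Ioi (2 * (G r - G u)))).toReal) :
    ∀ r > (0:ℝ),
      (r/2) * f (B (r/2)) ≤ g r ∧
        g r ≤ (Real.exp 1 / (Real.exp 1 - 1)) * r * f (B r) := by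
  -- finiteness of tails of ν
  have hfin : ∀ a : ℝ, 0 < a → ν (Ioi a) < ⊤ := by
    intro a ha
    by_contra hcon
    push_neg at hcon
    have htop : ν (Ioi a) = ⊤ := top_le_iff.mp hcon
    have h1 : ENNReal.ofReal (min 1 a) * ν (Ioi a)
        ≤ ∫⁻ t in Ioi (0:ℝ), ENNReal.ofReal (min 1 t) ∂ν := by
      calc ENNReal.ofReal (min 1 a) * ν (Ioi a)
          = ∫⁻ _ in Ioi a, ENNReal.ofReal (min 1 a) ∂ν := (setLIntegral_const _ _).symm
        _ ≤ ∫⁻ t in Ioi a, ENNReal.ofReal (min 1 t) ∂ν :=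
            setLIntegral_mono' measurableSet_Ioi fun t ht =>
              ENNReal.ofReal_le_ofReal (min_le_min le_rfl (le_of_lt ht))
        _ ≤ ∫⁻ t in Ioi (0:ℝ), ENNReal.ofReal (min 1 t) ∂ν :=
            lintegral_mono_set (Ioi_subset_Ioi ha.le)
    rw [htop, ENNReal.mul_top (by
      simp only [ne_eq, ENNReal.ofReal_eq_zero, not_le]
      exact lt_min one_pos ha)] at h1
    exact hlevy.ne (top_le_iff.mp h1)
  haveI : SigmaFinite ν := by
    refine ⟨⟨⟨fun n => Iic 0 ∪ Ioi (1/(n+1)), fun _ => trivial, fun n => ?_, ?_⟩⟩⟩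
    · refine lt_of_le_of_lt (measure_union_le _ _) ?_
      rw [hsupp]
      simpa using hfin (1/(n+1)) (by positivity)
    · rw [Set.eq_univ_iff_forall]
      intro y
      rcases le_or_gt y 0 with hy | hy
      · exact Set.mem_iUnion.mpr ⟨0, Or.inl hy⟩
      · obtain ⟨n, hn⟩ := exists_nat_one_div_lt hy
        exact Set.mem_iUnion.mpr ⟨n, Or.inr hn⟩
  set T : ℝ → ℝ≥0∞ := fun w => ν (Ioi w) with hT
  have hTanti : Antitone T := fun a b hab => measure_mono (Ioi_subset_Ioi hab)
  set J : ℝ → ℝ≥0∞ := fun x => ∫⁻ t in Ioi (0:ℝ), ENNReal.ofReal (1 - Real.exp (-(x*t))) ∂ν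
    with hJ
  have hJfin : ∀ x : ℝ, 0 < x → J x < ⊤ := by
    intro x hx
    have hb : ∀ t ∈ Ioi (0:ℝ), ENNReal.ofReal (1 - Real.exp (-(x*t)))
        ≤ ENNReal.ofReal (max 1 x * min 1 t) := by
      intro t ht
      apply ENNReal.ofReal_le_ofReal
      have hexp : 1 - Real.exp (-(x*t)) ≤ min 1 (x*t) := by
        refine le_min ?_ ?_
        · have := Real.exp_pos (-(x*t)); linarith
        · have := Real.add_one_le_exp (-(x*t)); linarith
      rcases le_total t 1 with h | h
      · rw [min_eq_right h]
        calc 1 - Real.exp (-(x*t)) ≤ x*t := le_trans hexp (min_le_right _ _)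
          _ ≤ max 1 x * t := mul_le_mul_of_nonneg_right (le_max_right 1 x) (le_of_lt ht)
      · rw [min_eq_left h]
        calc 1 - Real.exp (-(x*t)) ≤ 1 := le_trans hexp (min_le_left _ _)
          _ = 1 * 1 := (one_mul 1).symm
          _ ≤ max 1 x * 1 := by
              apply mul_le_mul_of_nonneg_right (le_max_left 1 x) zero_le_one
    calc J x ≤ ∫⁻ t in Ioi (0:ℝ), ENNReal.ofReal (max 1 x * min 1 t) ∂ν :=
          setLIntegral_mono' measurableSet_Ioi hb
      _ = ∫⁻ t in Ioi (0:ℝ), ENNReal.ofReal (max 1 x) * ENNReal.ofReal (min 1 t) ∂ν := by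
          apply lintegral_congr
          intro t
          rw [ENNReal.ofReal_mul (le_trans zero_le_one (le_max_left 1 x))]
      _ = ENNReal.ofReal (max 1 x) * ∫⁻ t in Ioi (0:ℝ), ENNReal.ofReal (min 1 t) ∂ν :=
          lintegral_const_mul' _ _ ENNReal.ofReal_ne_top
      _ < ⊤ := ENNReal.mul_lt_top ENNReal.ofReal_lt_top hlevy
  have hfJ : ∀ x : ℝ, 0 < x → f x = (J x).toReal := by
    intro x hx
    rw [hf x]
    have hmc : ∀ t : ℝ, -(t*x) = -(x*t) := fun t => by ring
    simp_rw [hmc]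
    rw [integral_eq_lintegral_of_nonneg_ae]
    · exact (ae_restrict_iff' measurableSet_Ioi).mpr (ae_of_all _ fun t ht => by
        simp only [Pi.zero_apply]
        have := Real.exp_pos (-(x*t))
        have h2 : Real.exp (-(x*t)) ≤ 1 := by
          rw [Real.exp_le_one_iff]
          have : 0 < x*t := mul_pos hx ht
          linarith
        linarith)
    · exact (Continuous.aestronglyMeasurable (by continuity))
  have hfnn : ∀ x : ℝ, 0 < x → 0 ≤ f x := fun x hx => by
    rw [hfJ x hx]; exact ENNReal.toReal_nonneg
  have hJrepr : ∀ x : ℝ, 0 < x →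
      J x = ∫⁻ w in Ioi (0:ℝ), ENNReal.ofReal (x * Real.exp (-(x*w))) * T w := fun x hx =>
    aux_fubini ν x hx
  intro r hr
  have hbr : 0 < B r := hBpos r hr
  have hb2 : 0 < B (r/2) := hBpos _ (by linarith)
  set h : ℝ → ℝ := fun s => 1 / (2 * s * B s) with hh
  -- interval integrability of h on positive intervals
  have hIntII : ∀ a c : ℝ, 0 < a → 0 < c → IntervalIntegrable h volume a c := by
    intro a c ha hc
    rw [intervalIntegrable_iff]
    set m := min a c with hm
    have hm0 : 0 < m := lt_min ha hc
    have hBae : AEMeasurable B (volume.restrict (Set.uIoc a c)) := by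
      apply aemeasurable_restrict_of_monotoneOn measurableSet_uIoc
      intro u hu v hv huv
      exact hBmono u v (lt_of_lt_of_le hm0 hu.1.le) huv
    have hhae : AEMeasurable h (volume.restrict (Set.uIoc a c)) := by
      apply AEMeasurable.div aemeasurable_const
      exact (aemeasurable_const.mul aemeasurable_id').mul hBae
    refine ⟨hhae.aestronglyMeasurable, ?_⟩
    apply HasFiniteIntegral.restrict_of_bounded (C := 1/(2*m*B m))
      (measure_Ioc_lt_top)
    refine (ae_restrict_iff' measurableSet_uIoc).mpr (ae_of_all _ fun s hs => ?_)
    have hms : m < s := hs.1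
    have hs0 : 0 < s := hm0.trans hms
    have hBs := hBpos s hs0
    have hBm := hBpos m hm0
    have hBms := hBmono m s hm0 hms.le
    show ‖1/(2*s*B s)‖ ≤ 1/(2*m*B m)
    rw [Real.norm_eq_abs, abs_of_pos (by positivity)]
    apply one_div_le_one_div_of_le (by positivity)
    nlinarith
  -- G differences as integrals
  have hGsub : ∀ u v : ℝ, 0 < u → 0 < v → G v - G u = ∫ s in u..v, h s := by
    intro u v hu hv
    rw [hG v, hG u]
    exact integral_interval_sub_left (hIntII 1 v one_pos hv) (hIntII 1 u one_pos hu)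
  have hGmono : ∀ u v : ℝ, 0 < u → u ≤ v → G u ≤ G v := by
    intro u v hu huv
    have hv : 0 < v := lt_of_lt_of_le hu huv
    have hnn : 0 ≤ ∫ s in u..v, h s := by
      apply intervalIntegral.integral_nonneg huv
      intro s hs
      have hs0 : 0 < s := lt_of_lt_of_le hu hs.1
      have := hBpos s hs0
      positivity
    have hgs := hGsub u v hu hv
    linarith
  have key_low : ∀ u ∈ Ioo (0:ℝ) r, Real.log (r/u) / B r ≤ 2 * (G r - G u) := by
    rintro u ⟨hu0, hur⟩
    have hgs := hGsub u r hu0 hr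
    have hC : ContinuousOn (fun s : ℝ => 1/(2*B r) * (1/s)) (Set.uIcc u r) := by
      apply ContinuousOn.mul continuousOn_const
      apply ContinuousOn.div continuousOn_const continuousOn_id
      intro s hs
      rw [Set.uIcc_of_le hur.le] at hs
      exact ne_of_gt (lt_of_lt_of_le hu0 hs.1)
    have hint1 : IntervalIntegrable (fun s : ℝ => 1/(2*B r) * (1/s)) volume u r :=
      hC.intervalIntegrable
    have hmono := intervalIntegral.integral_mono_on hur.le hint1 (hIntII u r hu0 hr)
      (fun s hs => ?_)
    · have hlog : ∫ s in u..r, 1/(2*B r) * (1/s) = 1/(2*B r) * Real.log (r/u) := by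
        rw [intervalIntegral.integral_const_mul, integral_one_div
          (Set.notMem_uIcc_of_lt hu0 hr)]
      rw [hlog] at hmono
      have hid : Real.log (r/u) / B r = 2 * (1/(2*B r) * Real.log (r/u)) := by
        field_simp
      rw [hid]
      linarith
    · have hs0 : 0 < s := lt_of_lt_of_le hu0 hs.1
      have hBs := hBpos s hs0
      have hBsr := hBmono s r hs0 hs.2
      show 1/(2*B r) * (1/s) ≤ 1/(2*s*B s)
      have heq : 1/(2*B r) * (1/s) = 1/(2*s*B r) := by
        field_simp
      rw [heq]
      apply one_div_le_one_div_of_le (by positivity)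
      nlinarith
  have key_up : ∀ u ∈ Ioo (r/2) r, 2 * (G r - G u) ≤ Real.log (r/u) / B (r/2) := by
    rintro u ⟨hu2, hur⟩
    have hu0 : 0 < u := lt_trans (by linarith) hu2
    have hgs := hGsub u r hu0 hr
    have hC : ContinuousOn (fun s : ℝ => 1/(2*B (r/2)) * (1/s)) (Set.uIcc u r) := by
      apply ContinuousOn.mul continuousOn_const
      apply ContinuousOn.div continuousOn_const continuousOn_id
      intro s hs
      rw [Set.uIcc_of_le hur.le] at hs
      exact ne_of_gt (lt_of_lt_of_le hu0 hs.1)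
    have hint1 : IntervalIntegrable (fun s : ℝ => 1/(2*B (r/2)) * (1/s)) volume u r :=
      hC.intervalIntegrable
    have hmono := intervalIntegral.integral_mono_on hur.le (hIntII u r hu0 hr) hint1
      (fun s hs => ?_)
    · have hlog : ∫ s in u..r, 1/(2*B (r/2)) * (1/s) = 1/(2*B (r/2)) * Real.log (r/u) := by
        rw [intervalIntegral.integral_const_mul, integral_one_div
          (Set.notMem_uIcc_of_lt hu0 hr)]
      rw [hlog] at hmono
      have hid : Real.log (r/u) / B (r/2) = 2 * (1/(2*B (r/2)) * Real.log (r/u)) := by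
        field_simp
      rw [hid]
      linarith
    · have hs0 : 0 < s := lt_of_lt_of_le hu0 hs.1
      have hBs := hBpos s hs0
      have hB2s : B (r/2) ≤ B s := hBmono (r/2) s (by linarith) (by linarith [hs.1])
      show 1/(2*s*B s) ≤ 1/(2*B (r/2)) * (1/s)
      have heq : 1/(2*B (r/2)) * (1/s) = 1/(2*s*B (r/2)) := by
        field_simp
      rw [heq]
      apply one_div_le_one_div_of_le (by positivity)
      nlinarith
  -- tail monotonicity helper
  have hTanti : ∀ a c : ℝ, a ≤ c → ν (Ioi c) ≤ ν (Ioi a) :=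
    fun a c hac => measure_mono (Ioi_subset_Ioi hac)
  have hargpos : ∀ u ∈ Ioo (0:ℝ) r, 0 < Real.log (r/u) / B r := by
    rintro u ⟨hu0, hur⟩
    exact div_pos (Real.log_pos ((one_lt_div hu0).mpr hur)) hbr
  have hphifin : ∀ u ∈ Ioo (0:ℝ) r, ν (Ioi (2 * (G r - G u))) < ⊤ := fun u hu =>
    lt_of_le_of_lt (hTanti _ _ (key_low u hu)) (hfin _ (hargpos u hu))
  have hphimeas : AEMeasurable (fun u => (ν (Ioi (2 * (G r - G u)))).toReal)
      (volume.restrict (Ioo 0 r)) := by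
    apply aemeasurable_restrict_of_monotoneOn measurableSet_Ioo
    intro u hu v hv huv
    apply ENNReal.toReal_mono (hphifin v hv).ne
    apply hTanti
    have := hGmono u v hu.1 huv
    linarith
  have hgr : g r = (∫⁻ u in Ioo (0:ℝ) r, ν (Ioi (2 * (G r - G u)))).toReal := by
    rw [hg r, intervalIntegral.integral_of_le hr.le, integral_Ioc_eq_integral_Ioo,
      integral_eq_lintegral_of_nonneg_ae
        (ae_of_all _ fun u => by simp only [Pi.zero_apply]; exact ENNReal.toReal_nonneg)
        hphimeas.aestronglyMeasurable]
    congr 1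
    refine setLIntegral_congr_fun measurableSet_Ioo (fun u hu => ?_)
    rw [ENNReal.ofReal_toReal (hphifin u hu).ne]
  -- upper bound chain
  have cov1 : ∫⁻ u in Ioo (0:ℝ) r, ν (Ioi (Real.log (r/u) / B r))
      = ∫⁻ t in Ioi (0:ℝ),
          ENNReal.ofReal (r * B r * Real.exp (-(B r * t))) * ν (Ioi t) := by
    rw [← aux_img_Ioi r (B r) hr hbr,
      aux_cov_exp r (B r) hr hbr (Ioi 0) measurableSet_Ioi
        (fun u => ν (Ioi (Real.log (r/u) / B r)))]
    apply lintegral_congr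
    intro t
    have harg : Real.log (r / (r * Real.exp (-(B r*t)))) / B r = t := by
      rw [show r / (r * Real.exp (-(B r*t))) = Real.exp (B r*t) from by
        rw [Real.exp_neg]; field_simp, Real.log_exp, mul_div_cancel_left₀ _ hbr.ne']
    rw [harg]
  have hIup_le : (∫⁻ u in Ioo (0:ℝ) r, ν (Ioi (2 * (G r - G u))))
      ≤ ENNReal.ofReal r * J (B r) := by
    calc (∫⁻ u in Ioo (0:ℝ) r, ν (Ioi (2 * (G r - G u))))
        ≤ ∫⁻ u in Ioo (0:ℝ) r, ν (Ioi (Real.log (r/u) / B r)) :=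
          setLIntegral_mono' measurableSet_Ioo fun u hu => hTanti _ _ (key_low u hu)
      _ = ∫⁻ t in Ioi (0:ℝ),
            ENNReal.ofReal (r * B r * Real.exp (-(B r * t))) * ν (Ioi t) := cov1
      _ = ENNReal.ofReal r * ∫⁻ t in Ioi (0:ℝ),
            ENNReal.ofReal (B r * Real.exp (-(B r * t))) * ν (Ioi t) := by
          rw [← lintegral_const_mul' _ _ ENNReal.ofReal_ne_top]
          apply lintegral_congr
          intro t
          rw [← mul_assoc, ← ENNReal.ofReal_mul hr.le, ← mul_assoc]
      _ = ENNReal.ofReal r * J (B r) := by rw [hJrepr (B r) hbr]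
  have hIupfin : (∫⁻ u in Ioo (0:ℝ) r, ν (Ioi (2 * (G r - G u)))) < ⊤ :=
    lt_of_le_of_lt hIup_le (ENNReal.mul_lt_top ENNReal.ofReal_lt_top (hJfin (B r) hbr))
  have hupper : g r ≤ r * f (B r) := by
    rw [hgr, hfJ (B r) hbr]
    have := ENNReal.toReal_mono
      (ENNReal.mul_lt_top ENNReal.ofReal_lt_top (hJfin (B r) hbr)).ne hIup_le
    rwa [ENNReal.toReal_mul, ENNReal.toReal_ofReal hr.le] at this
  -- lower bound chain
  have hL : 0 < Real.log 2 / B (r/2) := div_pos (Real.log_pos one_lt_two) hb2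
  set L := Real.log 2 / B (r/2) with hLdef
  have hexpL : Real.exp (-(B (r/2) * L)) = 1/2 := by
    rw [hLdef, show B (r/2) * (Real.log 2 / B (r/2)) = Real.log 2 from by field_simp,
      Real.exp_neg, Real.exp_log two_pos]
    norm_num
  have himg2 : (fun t : ℝ => r * Real.exp (-(B (r/2)*t))) '' (Ioo 0 L) = Ioo (r/2) r := by
    rw [aux_img_Ioo r (B (r/2)) L hr hb2, hexpL,
      show r * (1/2) = r/2 from by ring]
  have cov2 : ∫⁻ u in Ioo (r/2) r, ν (Ioi (Real.log (r/u) / B (r/2)))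
      = ∫⁻ t in Ioo (0:ℝ) L,
          ENNReal.ofReal (r * B (r/2) * Real.exp (-(B (r/2) * t))) * ν (Ioi t) := by
    rw [← himg2, aux_cov_exp r (B (r/2)) hr hb2 (Ioo 0 L) measurableSet_Ioo
      (fun u => ν (Ioi (Real.log (r/u) / B (r/2))))]
    apply lintegral_congr
    intro t
    have harg : Real.log (r / (r * Real.exp (-(B (r/2)*t)))) / B (r/2) = t := by
      rw [show r / (r * Real.exp (-(B (r/2)*t))) = Real.exp (B (r/2)*t) from by
        rw [Real.exp_neg]; field_simp, Real.log_exp, mul_div_cancel_left₀ _ hb2.ne']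
    rw [harg]
  have hmeasc : Measurable fun t : ℝ =>
      ENNReal.ofReal (B (r/2) * Real.exp (-(B (r/2) * t))) :=
    Measurable.ennreal_ofReal
      (measurable_const.mul (Real.measurable_exp.comp (measurable_id.const_mul (B (r/2))).neg))
  have hdisj : Disjoint (Ioo (0:ℝ) L) (Ici L) := by
    rw [Set.disjoint_left]
    rintro t ⟨_, h1⟩ h2
    exact absurd h2 (not_le.mpr h1)
  have hsplit : (∫⁻ t in Ioi (0:ℝ),
        ENNReal.ofReal (B (r/2) * Real.exp (-(B (r/2) * t))) * ν (Ioi t))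
      = (∫⁻ t in Ioo (0:ℝ) L,
          ENNReal.ofReal (B (r/2) * Real.exp (-(B (r/2) * t))) * ν (Ioi t))
        + ∫⁻ t in Ici L,
            ENNReal.ofReal (B (r/2) * Real.exp (-(B (r/2) * t))) * ν (Ioi t) := by
    rw [← Ioo_union_Ici_eq_Ioi hL, lintegral_union measurableSet_Ici hdisj]
  have htail : (∫⁻ t in Ici L,
        ENNReal.ofReal (B (r/2) * Real.exp (-(B (r/2) * t))) * ν (Ioi t))
      ≤ ν (Ioi L) * ENNReal.ofReal (1/2) := by
    calc (∫⁻ t in Ici L,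
          ENNReal.ofReal (B (r/2) * Real.exp (-(B (r/2) * t))) * ν (Ioi t))
        ≤ ∫⁻ t in Ici L,
            ENNReal.ofReal (B (r/2) * Real.exp (-(B (r/2) * t))) * ν (Ioi L) :=
          setLIntegral_mono' measurableSet_Ici fun t ht =>
            mul_le_mul_right (hTanti _ _ ht) _
      _ = (∫⁻ t in Ici L, ENNReal.ofReal (B (r/2) * Real.exp (-(B (r/2) * t))))
            * ν (Ioi L) := lintegral_mul_const _ hmeasc
      _ = ENNReal.ofReal (Real.exp (-(B (r/2) * L))) * ν (Ioi L) := by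
          rw [aux_lint_Ici (B (r/2)) L hb2]
      _ = ν (Ioi L) * ENNReal.ofReal (1/2) := by rw [hexpL, mul_comm]
  have htr : ν (Ioi L) * ENNReal.ofReal (1/2)
      ≤ ∫⁻ t in Ioo (0:ℝ) L,
          ENNReal.ofReal (B (r/2) * Real.exp (-(B (r/2) * t))) * ν (Ioi t) := by
    calc ν (Ioi L) * ENNReal.ofReal (1/2)
        = (∫⁻ t in Ioo (0:ℝ) L, ENNReal.ofReal (B (r/2) * Real.exp (-(B (r/2) * t))))
            * ν (Ioi L) := by
          rw [aux_lint_Ioo (B (r/2)) L hb2 hL.le, hexpL]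
          rw [mul_comm]
          norm_num
      _ = ∫⁻ t in Ioo (0:ℝ) L,
            ENNReal.ofReal (B (r/2) * Real.exp (-(B (r/2) * t))) * ν (Ioi L) :=
          (lintegral_mul_const _ hmeasc).symm
      _ ≤ _ := setLIntegral_mono' measurableSet_Ioo fun t ht =>
          mul_le_mul_right (hTanti _ _ ht.2.le) _
  have hIfull_le : (∫⁻ t in Ioi (0:ℝ),
        ENNReal.ofReal (B (r/2) * Real.exp (-(B (r/2) * t))) * ν (Ioi t))
      ≤ 2 * ∫⁻ t in Ioo (0:ℝ) L,
          ENNReal.ofReal (B (r/2) * Real.exp (-(B (r/2) * t))) * ν (Ioi t) := by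
    rw [hsplit, two_mul]
    exact add_le_add_right (htail.trans htr) _
  have hlowchain : ENNReal.ofReal (r/2) * J (B (r/2))
      ≤ ∫⁻ u in Ioo (0:ℝ) r, ν (Ioi (2 * (G r - G u))) := by
    have h1 : ENNReal.ofReal (r/2) * J (B (r/2))
        ≤ ENNReal.ofReal r * ∫⁻ t in Ioo (0:ℝ) L,
            ENNReal.ofReal (B (r/2) * Real.exp (-(B (r/2) * t))) * ν (Ioi t) := by
      rw [hJrepr _ hb2]
      calc ENNReal.ofReal (r/2) * ∫⁻ w in Ioi (0:ℝ),
            ENNReal.ofReal (B (r/2) * Real.exp (-(B (r/2) * w))) * ν (Ioi w)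
          ≤ ENNReal.ofReal (r/2) * (2 * ∫⁻ t in Ioo (0:ℝ) L,
              ENNReal.ofReal (B (r/2) * Real.exp (-(B (r/2) * t))) * ν (Ioi t)) :=
            mul_le_mul_right hIfull_le _
        _ = ENNReal.ofReal r * ∫⁻ t in Ioo (0:ℝ) L,
              ENNReal.ofReal (B (r/2) * Real.exp (-(B (r/2) * t))) * ν (Ioi t) := by
            rw [← mul_assoc]
            congr 1
            rw [show (2:ℝ≥0∞) = ENNReal.ofReal 2 from (ENNReal.ofReal_ofNat 2).symm,
              ← ENNReal.ofReal_mul (by linarith)]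
            norm_num
    calc ENNReal.ofReal (r/2) * J (B (r/2))
        ≤ ENNReal.ofReal r * ∫⁻ t in Ioo (0:ℝ) L,
            ENNReal.ofReal (B (r/2) * Real.exp (-(B (r/2) * t))) * ν (Ioi t) := h1
      _ = ∫⁻ t in Ioo (0:ℝ) L,
            ENNReal.ofReal (r * B (r/2) * Real.exp (-(B (r/2) * t))) * ν (Ioi t) := by
          rw [← lintegral_const_mul' _ _ ENNReal.ofReal_ne_top]
          apply lintegral_congr
          intro t
          rw [← mul_assoc, ← ENNReal.ofReal_mul hr.le, ← mul_assoc]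
      _ = ∫⁻ u in Ioo (r/2) r, ν (Ioi (Real.log (r/u) / B (r/2))) := cov2.symm
      _ ≤ ∫⁻ u in Ioo (r/2) r, ν (Ioi (2 * (G r - G u))) :=
          setLIntegral_mono' measurableSet_Ioo fun u hu =>
            measure_mono (Ioi_subset_Ioi (key_up u hu))
      _ ≤ ∫⁻ u in Ioo (0:ℝ) r, ν (Ioi (2 * (G r - G u))) :=
          lintegral_mono_set (Ioo_subset_Ioo_left (by linarith))
  have hlower : (r/2) * f (B (r/2)) ≤ g r := by
    rw [hgr, hfJ _ hb2]
    have := ENNReal.toReal_mono hIupfin.ne hlowchain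
    rwa [ENNReal.toReal_mul, ENNReal.toReal_ofReal (by linarith)] at this
  refine ⟨hlower, ?_⟩
  have he1 : (1:ℝ) < Real.exp 1 := by
    have := Real.exp_one_gt_d9
    linarith
  have hce : (1:ℝ) ≤ Real.exp 1 / (Real.exp 1 - 1) := by
    rw [le_div_iff₀ (by linarith)]
    linarith
  have hfbr := hfnn (B r) hbr
  have h3 : r * f (B r) ≤ Real.exp 1 / (Real.exp 1 - 1) * (r * f (B r)) :=
    le_mul_of_one_le_left (mul_nonneg hr.le hfbr) hce
  calc g r ≤ r * f (B r) := hupper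
    _ ≤ Real.exp 1 / (Real.exp 1 - 1) * (r * f (B r)) := h3
    _ = Real.exp 1 / (Real.exp 1 - 1) * r * f (B r) := by ring
end
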